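/- arXiv:2503.01310 — 10 statements merged into one kernel-verified Lean document; each statement's English description precedes it below -/
import Mathlib

section
/- Let G be a connected directed multigraph with v vertices, e edges, and incidence matrix ∂, and let B ∈ Matrix (Fin v) (Fin e) ℝ be the Moore–Penrose pseudoinverse of ∂ᵀ. Then: (i) the range of the linear map w ↦ B.mulVec w from ℝ^e to ℝ^v equals { x : Fin v → ℝ | Σᵢ x i = 0 }, which has dimension v - 1; and (ii) the kernel of this map equals the kernel of w ↦ ∂.mulVec w, which has dimension e - v + 1 = Loops(G). -/
open Matrix

/-- Incidence matrix of a directed multigraph given by head and tail maps. -/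
noncomputable def inc {V E : Type*} [DecidableEq V] (head tail : E → V) : Matrix V E ℝ :=
  Matrix.of fun i j => (if i = head j then (1 : ℝ) else 0) - (if i = tail j then 1 else 0)

/-- Connectivity: any two vertices are joined by a chain of edges. -/
def Conn {V E : Type*} (head tail : E → V) : Prop :=
  Nonempty V ∧ ∀ a b : V, Relation.ReflTransGen
    (fun x y => ∃ j : E, (head j = x ∧ tail j = y) ∨ (head j = y ∧ tail j = x)) a b

/-- `B` is the Moore–Penrose pseudoinverse of `A`. -/
def IsMP {l m : Type*} [Fintype l] [Fintype m] (A : Matrix l m ℝ) (B : Matrix m l ℝ) : Prop :=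
  A * B * A = A ∧ B * A * B = B ∧ (A * B)ᵀ = A * B ∧ (B * A)ᵀ = B * A

/-- Degree of a vertex (loop edges counted twice). -/
def deg {V E : Type*} [Fintype E] [DecidableEq V] (head tail : E → V) (i : V) : ℕ :=
  (Finset.univ.filter fun j => head j = i).card + (Finset.univ.filter fun j => tail j = i).card

/-- Weighted (normalized) graph Laplacian `D^{-1/2} L D^{-1/2}`. -/
noncomputable def wLap {V E : Type*} [Fintype V] [Fintype E] [DecidableEq V]
    (head tail : E → V) (ω : V → ℝ) : Matrix V V ℝ :=
  Matrix.diagonal (fun i => (Real.sqrt (ω i))⁻¹) * (inc head tail * (inc head tail)ᵀ) *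
    Matrix.diagonal (fun i => (Real.sqrt (ω i))⁻¹)

/-- Tail map of the `n`-part subdivision. -/
def sTail {v' e' : ℕ} (tail' : Fin e' → Fin v') (n : ℕ) :
    Fin e' × Fin n → (Fin v') ⊕ (Fin e' × Fin (n - 1)) :=
  fun p => if h : p.2.val = 0 then Sum.inl (tail' p.1)
    else Sum.inr (p.1, ⟨p.2.val - 1, by have := p.2.isLt; omega⟩)

/-- Head map of the `n`-part subdivision. -/
def sHead {v' e' : ℕ} (head' : Fin e' → Fin v') (n : ℕ) :
    Fin e' × Fin n → (Fin v') ⊕ (Fin e' × Fin (n - 1)) :=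
  fun p => if h : p.2.val = n - 1 then Sum.inl (head' p.1)
    else Sum.inr (p.1, ⟨p.2.val, by have := p.2.isLt; omega⟩)

lemma incT_mulVec_apply {v e : ℕ} (head tail : Fin e → Fin v) (y : Fin v → ℝ) (j : Fin e) :
    ((inc head tail)ᵀ.mulVec y) j = y (head j) - y (tail j) := by
  simp [inc, Matrix.mulVec, dotProduct, sub_mul, Finset.sum_sub_distrib, ite_mul]

lemma sum_mulVec_inc {v e : ℕ} (head tail : Fin e → Fin v) (w : Fin e → ℝ) :
    ∑ i, ((inc head tail).mulVec w) i = 0 := by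
  simp only [Matrix.mulVec, dotProduct]
  rw [Finset.sum_comm]
  simp [inc, sub_mul, Finset.sum_sub_distrib]

/-- Kernel and image of the pseudoinverse of `∂ᵀ` for a connected multigraph:
the range is the mean-zero subspace (dimension `v - 1`), and the kernel is the
cycle space (dimension `e - v + 1`). -/
theorem pseudoinverse_kernel_and_image
    (v e : ℕ) (head tail : Fin e → Fin v) (hconn : Conn head tail)
    (B : Matrix (Fin v) (Fin e) ℝ) (hB : IsMP (inc head tail)ᵀ B) :
    (∀ x : Fin v → ℝ, x ∈ LinearMap.range B.mulVecLin ↔ ∑ i, x i = 0) ∧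
      Module.finrank ℝ (LinearMap.range B.mulVecLin) + 1 = v ∧
      LinearMap.ker B.mulVecLin = LinearMap.ker (inc head tail).mulVecLin ∧
      Module.finrank ℝ (LinearMap.ker B.mulVecLin) + v = e + 1 := by
  obtain ⟨hne, hcon⟩ := hconn
  obtain ⟨a₀⟩ := hne
  set D := inc head tail with hD
  obtain ⟨h1, h2, h3, h4⟩ := hB
  -- symmetric products
  have hsym1 : Bᵀ * D = Dᵀ * B := by
    have := h3
    rw [transpose_mul] at this
    simpa [transpose_transpose] using this
  have hsym2 : D * Bᵀ = B * Dᵀ := by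
    have := h4
    rw [transpose_mul] at this
    simpa [transpose_transpose] using this
  have hDBD : D = D * Bᵀ * D := by
    have := congrArg Matrix.transpose h1
    rw [transpose_mul, transpose_mul, transpose_transpose] at this
    rw [← Matrix.mul_assoc] at this
    exact this.symm
  -- factorizations
  have fac1 : B = D * (Bᵀ * B) := by
    calc B = B * Dᵀ * B := h2.symm
    _ = D * Bᵀ * B := by rw [hsym2]
    _ = D * (Bᵀ * B) := by rw [Matrix.mul_assoc]
  have fac2 : D = B * (Dᵀ * D) := by
    calc D = D * Bᵀ * D := hDBD
    _ = B * Dᵀ * D := by rw [hsym2]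
    _ = B * (Dᵀ * D) := by rw [Matrix.mul_assoc]
  have fac3 : D = (D * Dᵀ) * B := by
    calc D = D * Bᵀ * D := hDBD
    _ = D * (Bᵀ * D) := by rw [Matrix.mul_assoc]
    _ = D * (Dᵀ * B) := by rw [hsym1]
    _ = (D * Dᵀ) * B := by rw [Matrix.mul_assoc]
  have fac4 : B = (B * Bᵀ) * D := by
    calc B = B * Dᵀ * B := h2.symm
    _ = B * (Dᵀ * B) := by rw [Matrix.mul_assoc]
    _ = B * (Bᵀ * D) := by rw [hsym1]
    _ = (B * Bᵀ) * D := by rw [Matrix.mul_assoc]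
  -- range and kernel equalities
  have hrange : LinearMap.range B.mulVecLin = LinearMap.range D.mulVecLin := by
    apply le_antisymm
    · conv_lhs => rw [fac1]
      rw [Matrix.mulVecLin_mul]
      exact LinearMap.range_comp_le_range _ _
    · conv_lhs => rw [fac2]
      rw [Matrix.mulVecLin_mul]
      exact LinearMap.range_comp_le_range _ _
  have hker : LinearMap.ker B.mulVecLin = LinearMap.ker D.mulVecLin := by
    apply le_antisymm
    · conv_rhs => rw [fac3]
      rw [Matrix.mulVecLin_mul]
      exact LinearMap.ker_le_ker_comp _ _
    · conv_rhs => rw [fac4]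
      rw [Matrix.mulVecLin_mul]
      exact LinearMap.ker_le_ker_comp _ _
  -- connectivity: kernel of Dᵀ is the constants
  have hconst : ∀ y : Fin v → ℝ, (∀ j, y (head j) = y (tail j)) → ∀ a b : Fin v, y a = y b := by
    intro y hy a b
    have h := hcon a b
    induction h with
    | refl => rfl
    | tail _ hstep ih =>
      obtain ⟨j, ⟨hh, ht⟩ | ⟨hh, ht⟩⟩ := hstep
      · rw [ih, ← hh, ← ht]; exact hy j
      · rw [ih, ← ht, ← hh]; exact (hy j).symm
  have hkerT : LinearMap.ker (Dᵀ).mulVecLin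
      = Submodule.span ℝ {fun _ : Fin v => (1 : ℝ)} := by
    ext y
    simp only [LinearMap.mem_ker, Matrix.mulVecLin_apply]
    constructor
    · intro hy
      have heq : ∀ j, y (head j) = y (tail j) := by
        intro j
        have h := congrFun hy j
        rw [incT_mulVec_apply] at h
        simp only [Pi.zero_apply] at h
        linarith
      have hyc : y = (y a₀) • (fun _ : Fin v => (1 : ℝ)) := by
        funext b
        simpa using hconst y heq b a₀
      rw [hyc]
      exact Submodule.smul_mem _ _ (Submodule.mem_span_singleton_self _)
    · intro hy
      obtain ⟨c, rfl⟩ := Submodule.mem_span_singleton.1 hy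
      funext j
      rw [incT_mulVec_apply]
      simp
  have hone : (fun _ : Fin v => (1 : ℝ)) ≠ 0 := by
    intro h
    have := congrFun h a₀
    norm_num at this
  have hkerT1 : Module.finrank ℝ (LinearMap.ker (Dᵀ).mulVecLin) = 1 := by
    rw [hkerT]
    exact finrank_span_singleton hone
  have hpiv : Module.finrank ℝ (Fin v → ℝ) = v := by
    simp [Module.finrank_pi]
  have hpie : Module.finrank ℝ (Fin e → ℝ) = e := by
    simp [Module.finrank_pi]
  have hrnT : Module.finrank ℝ (LinearMap.range (Dᵀ).mulVecLin) + 1 = v := by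
    have h := LinearMap.finrank_range_add_finrank_ker (Dᵀ).mulVecLin
    rw [hkerT1, hpiv] at h
    exact h
  have hrkD : Module.finrank ℝ (LinearMap.range D.mulVecLin) + 1 = v := by
    have : (Dᵀ).rank = D.rank := Matrix.rank_transpose D
    unfold Matrix.rank at this
    rw [← this]
    exact hrnT
  -- the mean-zero subspace
  let f : (Fin v → ℝ) →ₗ[ℝ] ℝ :=
    { toFun := fun x => ∑ i, x i
      map_add' := by intro x y; simp [Finset.sum_add_distrib]
      map_smul' := by intro c x; simp [Finset.mul_sum] }
  have hfsurj : Function.Surjective f := by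
    intro r
    exact ⟨Pi.single a₀ r, by simp [f, Finset.sum_pi_single]⟩
  have hfS : Module.finrank ℝ (LinearMap.ker f) + 1 = v := by
    have h := LinearMap.finrank_range_add_finrank_ker f
    rw [LinearMap.range_eq_top.2 hfsurj, hpiv] at h
    rw [finrank_top] at h
    simp only [Module.finrank_self] at h
    omega
  have hsub : LinearMap.range D.mulVecLin ≤ LinearMap.ker f := by
    rintro x ⟨w, rfl⟩
    simp only [LinearMap.mem_ker, Matrix.mulVecLin_apply]
    exact sum_mulVec_inc head tail w
  have hSeq : LinearMap.range D.mulVecLin = LinearMap.ker f :=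
    Submodule.eq_of_le_of_finrank_eq hsub (by omega)
  have hrnD : Module.finrank ℝ (LinearMap.range D.mulVecLin)
      + Module.finrank ℝ (LinearMap.ker D.mulVecLin) = e := by
    have h := LinearMap.finrank_range_add_finrank_ker D.mulVecLin
    rw [hpie] at h
    exact h
  refine ⟨?_, ?_, hker, ?_⟩
  · intro x
    rw [hrange, hSeq]
    exact LinearMap.mem_ker
  · rw [hrange]; exact hrkD
  · rw [hker]; omega
end

section
/- Let G' be a directed multigraph with v' vertices and e' edges, let n ≥ 2, and let G be the n-part subdivision of G' with incidence matrix ∂ (indexed by the vertex type (Fin v') ⊕ (Fin e' × Fin (n-1)) and the edge type Fin e' × Fin n), while ∂' is the incidence matrix of G'. Define the matrices f₀ (of size v × v') by f₀ a i = (if a = Sum.inl i then 1 else 0) and f₁ (of size e × e') by f₁ (i,k) j = (if i = j then 1 else 0). Then f₁ᵀ * f₁ = (n : ℝ) • (1 : Matrix (Fin e') (Fin e') ℝ) and ∂ * f₁ = f₀ * ∂'. -/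
open Matrix

/-- Chain map properties of the subdivision maps: `f₁ᵀ f₁ = n I` and
`∂ f₁ = f₀ ∂'`. -/
theorem subdivision_chain_map_properties
    (v' e' n : ℕ) (hn : 2 ≤ n) (head' tail' : Fin e' → Fin v')
    (f₀ : Matrix ((Fin v') ⊕ (Fin e' × Fin (n - 1))) (Fin v') ℝ)
    (hf₀ : ∀ a i, f₀ a i = if a = Sum.inl i then 1 else 0)
    (f₁ : Matrix (Fin e' × Fin n) (Fin e') ℝ)
    (hf₁ : ∀ p j, f₁ p j = if p.1 = j then 1 else 0) :
    f₁ᵀ * f₁ = (n : ℝ) • (1 : Matrix (Fin e') (Fin e') ℝ) ∧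
      inc (sHead head' n) (sTail tail' n) * f₁ = f₀ * inc head' tail' := by
  constructor
  · ext j j'
    by_cases h : j = j'
    · subst h
      simp [Matrix.mul_apply, hf₁, Fintype.sum_prod_type, Finset.sum_ite_eq', mul_comm]
    · simp [Matrix.mul_apply, hf₁, Matrix.one_apply, h, Fintype.sum_prod_type,
        apply_ite, Finset.sum_ite_eq', Ne.symm h]
  · ext a j
    rw [Matrix.mul_apply, Matrix.mul_apply]
    have hL : ∑ p : Fin e' × Fin n, inc (sHead head' n) (sTail tail' n) a p * f₁ p j
        = ∑ k : Fin n, inc (sHead head' n) (sTail tail' n) a (j, k) := by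
      rw [Fintype.sum_prod_type]
      rw [Finset.sum_eq_single j]
      · simp [hf₁]
      · intro i _ hij; simp [hf₁, hij]
      · simp
    rw [hL]
    simp only [inc, Matrix.of_apply, Finset.sum_sub_distrib]
    cases a with
    | inl i =>
      have key1 : ∑ k : Fin n,
          (if (Sum.inl i : (Fin v') ⊕ (Fin e' × Fin (n-1))) = sHead head' n (j,k)
            then (1:ℝ) else 0) = (if i = head' j then 1 else 0) := by
        rw [Finset.sum_eq_single (⟨n-1, by omega⟩ : Fin n)]
        · simp [sHead]
        · intro k _ hk
          have : k.val ≠ n-1 := fun h => hk (Fin.ext h)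
          simp [sHead, this]
        · simp
      have key2 : ∑ k : Fin n,
          (if (Sum.inl i : (Fin v') ⊕ (Fin e' × Fin (n-1))) = sTail tail' n (j,k)
            then (1:ℝ) else 0) = (if i = tail' j then 1 else 0) := by
        rw [Finset.sum_eq_single (⟨0, by omega⟩ : Fin n)]
        · simp [sTail]
        · intro k _ hk
          have : k.val ≠ 0 := fun h => hk (Fin.ext h)
          simp [sTail, this]
        · simp
      rw [key1, key2]
      simp [hf₀, Finset.sum_ite_eq']
    | inr q =>
      obtain ⟨i, m⟩ := q
      have hm : m.val < n - 1 := m.isLt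
      have key1 : ∑ k : Fin n,
          (if (Sum.inr (i, m) : (Fin v') ⊕ (Fin e' × Fin (n-1))) = sHead head' n (j,k)
            then (1:ℝ) else 0) = (if i = j then 1 else 0) := by
        rw [Finset.sum_eq_single (⟨m.val, by omega⟩ : Fin n)]
        · have : (m.val : ℕ) ≠ n - 1 := by omega
          simp [sHead, this, Prod.ext_iff, Fin.ext_iff, eq_comm]
        · intro k _ hk
          have hk' : k.val ≠ m.val := fun h => hk (Fin.ext h)
          by_cases h1 : k.val = n - 1
          · simp [sHead, h1]
          · simp [sHead, h1, Prod.ext_iff, Fin.ext_iff]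
            intro _; omega
        · simp
      have key2 : ∑ k : Fin n,
          (if (Sum.inr (i, m) : (Fin v') ⊕ (Fin e' × Fin (n-1))) = sTail tail' n (j,k)
            then (1:ℝ) else 0) = (if i = j then 1 else 0) := by
        rw [Finset.sum_eq_single (⟨m.val + 1, by omega⟩ : Fin n)]
        · have : (m.val + 1 : ℕ) ≠ 0 := by omega
          simp [sTail, this, Prod.ext_iff, Fin.ext_iff, eq_comm]
        · intro k _ hk
          have hk' : k.val ≠ m.val + 1 := fun h => hk (Fin.ext h)
          by_cases h1 : k.val = 0
          · simp [sTail, h1]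
          · simp [sTail, h1, Prod.ext_iff, Fin.ext_iff]
            intro _; omega
        · simp
      rw [key1, key2]
      simp [hf₀]
end

section
/- Let G' be a directed multigraph with incidence matrix ∂', let n ≥ 2, let G be the n-part subdivision of G' with incidence matrix ∂, and let f₁ be the e × e' matrix with f₁ (i,k) j = (if i = j then 1 else 0). Then the linear map w ↦ f₁.mulVec w is injective, and the image under this map of the kernel of w ↦ ∂'.mulVec w equals the kernel of w ↦ ∂.mulVec w; that is, f₁ maps the cycle space of G' bijectively onto the cycle space of G. -/
open Matrix

/-- `f₁` is injective and maps the cycle space of `G'` bijectively onto the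
cycle space of the subdivision `G`. -/
theorem subdivision_cycle_space
    (v' e' n : ℕ) (hn : 2 ≤ n) (head' tail' : Fin e' → Fin v')
    (f₁ : Matrix (Fin e' × Fin n) (Fin e') ℝ)
    (hf₁ : ∀ p j, f₁ p j = if p.1 = j then 1 else 0) :
    Function.Injective f₁.mulVec ∧
      Submodule.map f₁.mulVecLin (LinearMap.ker (inc head' tail').mulVecLin)
        = LinearMap.ker (inc (sHead head' n) (sTail tail' n)).mulVecLin := by
  have h0 : (0:ℕ) < n := by omega
  have hlast : n - 1 < n := by omega
  have hf : ∀ (w : Fin e' → ℝ) (p : Fin e' × Fin n), f₁.mulVec w p = w p.1 := by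
    intro w p
    simp [Matrix.mulVec, dotProduct, hf₁, ite_mul]
  have rowA : ∀ (x : Fin e' × Fin n → ℝ) (a : Fin v'),
      (inc (sHead head' n) (sTail tail' n)).mulVec x (Sum.inl a)
        = ∑ j : Fin e', ((if a = head' j then (1:ℝ) else 0) * x (j, ⟨n-1, hlast⟩)
              - (if a = tail' j then 1 else 0) * x (j, ⟨0, h0⟩)) := by
    intro x a
    simp only [Matrix.mulVec, dotProduct]
    rw [Fintype.sum_prod_type]
    refine Finset.sum_congr rfl fun j _ => ?_
    have hH : ∀ k : Fin n,
        (if Sum.inl a = sHead head' n (j,k) then (1:ℝ) else 0)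
          = if k = ⟨n-1, hlast⟩ then (if a = head' j then (1:ℝ) else 0) else 0 := by
      intro k
      by_cases h : (k:ℕ) = n - 1
      · simp only [sHead, dif_pos h]
        rw [if_pos (Fin.ext h)]
        simp
      · simp only [sHead, dif_neg h]
        rw [if_neg (by simp), if_neg (by simp [Fin.ext_iff]; omega)]
    have hT : ∀ k : Fin n,
        (if Sum.inl a = sTail tail' n (j,k) then (1:ℝ) else 0)
          = if k = ⟨0, h0⟩ then (if a = tail' j then (1:ℝ) else 0) else 0 := by
      intro k
      by_cases h : (k:ℕ) = 0
      · simp only [sTail, dif_pos h]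
        rw [if_pos (Fin.ext h)]
        simp
      · simp only [sTail, dif_neg h]
        rw [if_neg (by simp), if_neg (by simp [Fin.ext_iff]; omega)]
    simp only [inc, Matrix.of_apply, hH, hT, sub_mul, ite_mul, zero_mul,
      Finset.sum_sub_distrib, Finset.sum_ite_eq']
    simp
  have rowB : ∀ (x : Fin e' × Fin n → ℝ) (i : Fin e') (m : Fin (n-1)),
      (inc (sHead head' n) (sTail tail' n)).mulVec x (Sum.inr (i, m))
        = x (i, ⟨m.1, by have := m.isLt; omega⟩) - x (i, ⟨m.1+1, by have := m.isLt; omega⟩) := by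
    intro x i m
    have hm := m.isLt
    simp only [Matrix.mulVec, dotProduct]
    have hH : ∀ p : Fin e' × Fin n,
        (if Sum.inr (i,m) = sHead head' n p then (1:ℝ) else 0)
          = if p = (i, ⟨m.1, by omega⟩) then 1 else 0 := by
      rintro ⟨j, k⟩
      by_cases h : (k:ℕ) = n - 1
      · simp only [sHead, dif_pos h]
        rw [if_neg (by simp), if_neg (by simp [Prod.ext_iff, Fin.ext_iff]; omega)]
      · simp only [sHead, dif_neg h]
        refine if_congr ?_ rfl rfl
        simp only [Sum.inr.injEq, Prod.mk.injEq, Fin.ext_iff, Fin.val_mk]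
        omega
    have hT : ∀ p : Fin e' × Fin n,
        (if Sum.inr (i,m) = sTail tail' n p then (1:ℝ) else 0)
          = if p = (i, ⟨m.1+1, by omega⟩) then 1 else 0 := by
      rintro ⟨j, k⟩
      by_cases h : (k:ℕ) = 0
      · simp only [sTail, dif_pos h]
        rw [if_neg (by simp), if_neg (by simp [Prod.ext_iff, Fin.ext_iff]; omega)]
      · simp only [sTail, dif_neg h]
        refine if_congr ?_ rfl rfl
        simp only [Sum.inr.injEq, Prod.mk.injEq, Fin.ext_iff, Fin.val_mk]
        omega
    simp only [inc, Matrix.of_apply, hH, hT, sub_mul, ite_mul, zero_mul, one_mul,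
      Finset.sum_sub_distrib, Finset.sum_ite_eq']
    simp
  constructor
  · intro w w' h
    funext i
    have := congrFun h (i, ⟨0, h0⟩)
    rwa [hf, hf] at this
  · ext x
    simp only [Submodule.mem_map, LinearMap.mem_ker, Matrix.mulVecLin_apply]
    constructor
    · rintro ⟨w, hw, rfl⟩
      funext b
      cases b with
      | inl a =>
        have ha := congrFun hw a
        simp only [Matrix.mulVec, dotProduct, inc, Matrix.of_apply, sub_mul,
          Pi.zero_apply] at ha
        rw [rowA]
        simp only [hf, Pi.zero_apply]
        simpa using ha
      | inr p =>
        obtain ⟨i, m⟩ := p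
        rw [rowB]
        simp [hf]
    · intro hx
      have hconst : ∀ (i : Fin e') (t : ℕ) (ht : t < n),
          x (i, ⟨t, ht⟩) = x (i, ⟨0, h0⟩) := by
        intro i t
        induction t with
        | zero => intro ht; rfl
        | succ s ih =>
          intro ht
          have hs : s < n - 1 := by omega
          have h2 := (rowB x i ⟨s, hs⟩).symm.trans (congrFun hx (Sum.inr (i, ⟨s, hs⟩)))
          simp only [Pi.zero_apply] at h2
          have h3 := sub_eq_zero.mp h2
          rw [← h3]
          exact ih (by omega)
      refine ⟨fun i => x (i, ⟨0, h0⟩), ?_, ?_⟩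
      · funext a
        have ha : (∑ j : Fin e', ((if a = head' j then (1:ℝ) else 0) * x (j, ⟨n-1, hlast⟩)
              - (if a = tail' j then 1 else 0) * x (j, ⟨0, h0⟩))) = 0 := by
          simpa using (rowA x a).symm.trans (congrFun hx (Sum.inl a))
        have key : (inc head' tail').mulVec (fun i => x (i, ⟨0, h0⟩)) a
            = ∑ j : Fin e', ((if a = head' j then (1:ℝ) else 0) * x (j, ⟨n-1, hlast⟩)
              - (if a = tail' j then 1 else 0) * x (j, ⟨0, h0⟩)) := by
          simp only [Matrix.mulVec, dotProduct, inc, Matrix.of_apply, sub_mul]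
          refine Finset.sum_congr rfl fun j _ => ?_
          rw [hconst j (n-1) hlast]
        simp only [Pi.zero_apply]
        exact key.trans ha
      · funext p
        rw [hf]
        obtain ⟨i, k⟩ := p
        exact (hconst i k.1 k.isLt).symm
end

section
/- Let G' be a directed multigraph with incidence matrix ∂', let n ≥ 2, let G be the n-part subdivision of G' with incidence matrix ∂, and let f₁ be the e × e' matrix with f₁ (i,k) j = (if i = j then 1 else 0). Let B be the Moore–Penrose pseudoinverse of ∂ and B' the Moore–Penrose pseudoinverse of ∂'. Then f₁ * (B' * ∂') = (B * ∂) * f₁. (Equivalently, transposing: f₁ᵀ * ∂ᵀ * (∂⁺)ᵀ = (∂')ᵀ * ((∂')⁺)ᵀ * f₁ᵀ, i.e. (f₁ᵀ ⊗ I_d)·P = P'·(f₁ᵀ ⊗ I_d) where P, P' are the orthogonal projectors onto the column spaces of ∂ᵀ, (∂')ᵀ.) -/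
open Matrix

lemma sum_inc_mul {V E : Type*} [Fintype V] [DecidableEq V] [Fintype E] (head tail : E → V)
    (j : E) (g : V → ℝ) :
    ∑ w, inc head tail w j * g w = g (head j) - g (tail j) := by
  simp only [inc, Matrix.of_apply, sub_mul, ite_mul, one_mul, zero_mul]
  rw [Finset.sum_sub_distrib]
  simp [Finset.sum_ite_eq']

noncomputable def Mmat {v' e' : ℕ} (head' tail' : Fin e' → Fin v') (n : ℕ) :
    Matrix ((Fin v') ⊕ (Fin e' × Fin (n-1))) (Fin v') ℝ :=
  fun w x => match w with
  | Sum.inl y => (n : ℝ) * (if x = y then 1 else 0)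
  | Sum.inr (j, m) => (n : ℝ) * (if x = tail' j then 1 else 0)
      + ((m : ℕ) + 1 : ℝ) * ((if x = head' j then (1:ℝ) else 0) - (if x = tail' j then 1 else 0))

lemma Mmat_inl {v' e' : ℕ} (head' tail' : Fin e' → Fin v') (n : ℕ) (y x : Fin v') :
    Mmat head' tail' n (Sum.inl y) x = (n : ℝ) * (if x = y then 1 else 0) := rfl

lemma Mmat_inr {v' e' : ℕ} (head' tail' : Fin e' → Fin v') (n : ℕ) (j : Fin e')
    (m : Fin (n-1)) (x : Fin v') :
    Mmat head' tail' n (Sum.inr (j, m)) x = (n : ℝ) * (if x = tail' j then 1 else 0)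
      + ((m : ℕ) + 1 : ℝ) * ((if x = head' j then (1:ℝ) else 0) - (if x = tail' j then 1 else 0)) := rfl

lemma sHead_pos {v' e' : ℕ} (head' : Fin e' → Fin v') (n : ℕ) (p : Fin e' × Fin n)
    (h : (p.2 : ℕ) = n - 1) : sHead head' n p = Sum.inl (head' p.1) := dif_pos h

lemma sHead_neg {v' e' : ℕ} (head' : Fin e' → Fin v') (n : ℕ) (p : Fin e' × Fin n)
    (h : ¬ (p.2 : ℕ) = n - 1) :
    sHead head' n p = Sum.inr (p.1, ⟨p.2.val, by have := p.2.isLt; omega⟩) := dif_neg h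

lemma sTail_pos {v' e' : ℕ} (tail' : Fin e' → Fin v') (n : ℕ) (p : Fin e' × Fin n)
    (h : (p.2 : ℕ) = 0) : sTail tail' n p = Sum.inl (tail' p.1) := dif_pos h

lemma sTail_neg {v' e' : ℕ} (tail' : Fin e' → Fin v') (n : ℕ) (p : Fin e' × Fin n)
    (h : ¬ (p.2 : ℕ) = 0) :
    sTail tail' n p = Sum.inr (p.1, ⟨p.2.val - 1, by have := p.2.isLt; omega⟩) := dif_neg h

lemma idA {v' e' : ℕ} (head' tail' : Fin e' → Fin v') (n : ℕ) (hn : 2 ≤ n)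
    (f₁ : Matrix (Fin e' × Fin n) (Fin e') ℝ)
    (hf₁ : ∀ p j, f₁ p j = if p.1 = j then 1 else 0) :
    f₁ * (inc head' tail')ᵀ
      = (inc (sHead head' n) (sTail tail' n))ᵀ * Mmat head' tail' n := by
  ext p x
  obtain ⟨i, k⟩ := p
  have hL : (f₁ * (inc head' tail')ᵀ) (i, k) x = inc head' tail' x i := by
    simp [Matrix.mul_apply, hf₁, ite_mul, Finset.sum_ite_eq']
  have hR : ((inc (sHead head' n) (sTail tail' n))ᵀ * Mmat head' tail' n) (i, k) x
      = Mmat head' tail' n (sHead head' n (i,k)) x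
        - Mmat head' tail' n (sTail tail' n (i,k)) x := by
    simp only [Matrix.mul_apply, Matrix.transpose_apply]
    exact sum_inc_mul _ _ _ _
  rw [hL, hR]
  simp only [inc, Matrix.of_apply]
  by_cases hk0 : (k : ℕ) = 0 <;> by_cases hk1 : (k : ℕ) = n - 1
  · omega
  · rw [sHead_neg head' n (i,k) hk1, sTail_pos tail' n (i,k) hk0, Mmat_inr, Mmat_inl]
    simp only [hk0]
    push_cast
    ring
  · rw [sHead_pos head' n (i,k) hk1, sTail_neg tail' n (i,k) hk0, Mmat_inl, Mmat_inr]
    simp only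
    have h2 : (((k : ℕ) - 1 : ℕ) : ℝ) = (n : ℝ) - 2 := by
      have : (k : ℕ) - 1 = n - 2 := by omega
      rw [this]; push_cast [show 2 ≤ n from hn]; ring
    rw [h2]
    ring
  · rw [sHead_neg head' n (i,k) hk1, sTail_neg tail' n (i,k) hk0, Mmat_inr, Mmat_inr]
    simp only
    have h2 : (((k : ℕ) - 1 : ℕ) : ℝ) = ((k : ℕ) : ℝ) - 1 := by
      push_cast [show 1 ≤ (k : ℕ) by omega]; ring
    rw [h2]
    ring

noncomputable def Nmat (v' e' n : ℕ) :
    Matrix ((Fin v') ⊕ (Fin e' × Fin (n-1))) (Fin v') ℝ :=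
  fun w x => if w = Sum.inl x then 1 else 0

lemma sum_indicator_unique {α : Type*} [Fintype α] [DecidableEq α] (f : α → ℝ) (k0 : α) (c : ℝ)
    (h : ∀ k, f k = if k = k0 then c else 0) : ∑ k, f k = c := by
  rw [Finset.sum_congr rfl fun k _ => h k]
  simp [Finset.sum_ite_eq']

section sums
variable {v' e' : ℕ} (head' tail' : Fin e' → Fin v') (n : ℕ)

lemma sum_head_inl (hn : 2 ≤ n) (y : Fin v') (j : Fin e') :
    ∑ k : Fin n, (if (Sum.inl y : (Fin v') ⊕ (Fin e' × Fin (n-1))) = sHead head' n (j, k)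
      then (1:ℝ) else 0) = if y = head' j then 1 else 0 := by
  apply sum_indicator_unique _ (⟨n-1, by omega⟩ : Fin n)
  intro k
  by_cases h : (k : ℕ) = n - 1
  · have hk : k = (⟨n-1, by omega⟩ : Fin n) := Fin.ext (by simpa using h)
    rw [sHead_pos _ _ _ h]
    simp [hk]
  · have hk : ¬ k = (⟨n-1, by omega⟩ : Fin n) := by
      simp only [Fin.ext_iff]; simpa using h
    rw [sHead_neg _ _ _ h]
    simp [hk]

lemma sum_head_inr (hn : 2 ≤ n) (j0 : Fin e') (m : Fin (n-1)) (j : Fin e') :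
    ∑ k : Fin n, (if (Sum.inr (j0, m) : (Fin v') ⊕ (Fin e' × Fin (n-1))) = sHead head' n (j, k)
      then (1:ℝ) else 0) = if j0 = j then 1 else 0 := by
  have hm := m.isLt
  apply sum_indicator_unique _ (⟨(m : ℕ), by omega⟩ : Fin n)
  intro k
  by_cases h : (k : ℕ) = n - 1
  · have hk : ¬ k = (⟨(m : ℕ), by omega⟩ : Fin n) := by
      simp only [Fin.ext_iff]; omega
    rw [sHead_pos _ _ _ h]
    simp [hk]
  · rw [sHead_neg _ _ _ h]
    by_cases hk : (k : ℕ) = (m : ℕ)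
    · have hk' : k = (⟨(m : ℕ), by omega⟩ : Fin n) := Fin.ext (by simpa using hk)
      rw [if_pos hk']
      simp [Prod.ext_iff, Fin.ext_iff, hk.symm]
    · have hk' : ¬ k = (⟨(m : ℕ), by omega⟩ : Fin n) := by
        simp only [Fin.ext_iff]; simpa using hk
      have hne : ¬ ((Sum.inr (j0, m) : (Fin v') ⊕ (Fin e' × Fin (n-1)))
          = Sum.inr (j, ⟨(k : ℕ), by have := k.isLt; omega⟩)) := by
        simp only [Sum.inr.injEq, Prod.ext_iff, Fin.ext_iff]
        rintro ⟨-, h2⟩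
        exact hk (by omega)
      simp [hk', hne]

lemma sum_tail_inl (hn : 2 ≤ n) (y : Fin v') (j : Fin e') :
    ∑ k : Fin n, (if (Sum.inl y : (Fin v') ⊕ (Fin e' × Fin (n-1))) = sTail tail' n (j, k)
      then (1:ℝ) else 0) = if y = tail' j then 1 else 0 := by
  apply sum_indicator_unique _ (⟨0, by omega⟩ : Fin n)
  intro k
  by_cases h : (k : ℕ) = 0
  · have hk : k = (⟨0, by omega⟩ : Fin n) := Fin.ext (by simpa using h)
    rw [sTail_pos _ _ _ h]
    simp [hk]
  · have hk : ¬ k = (⟨0, by omega⟩ : Fin n) := by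
      simp only [Fin.ext_iff]; simpa using h
    rw [sTail_neg _ _ _ h]
    simp [hk]

lemma sum_tail_inr (hn : 2 ≤ n) (j0 : Fin e') (m : Fin (n-1)) (j : Fin e') :
    ∑ k : Fin n, (if (Sum.inr (j0, m) : (Fin v') ⊕ (Fin e' × Fin (n-1))) = sTail tail' n (j, k)
      then (1:ℝ) else 0) = if j0 = j then 1 else 0 := by
  have hm := m.isLt
  apply sum_indicator_unique _ (⟨(m : ℕ) + 1, by omega⟩ : Fin n)
  intro k
  by_cases h : (k : ℕ) = 0
  · have hk : ¬ k = (⟨(m : ℕ) + 1, by omega⟩ : Fin n) := by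
      simp only [Fin.ext_iff]; omega
    rw [sTail_pos _ _ _ h]
    simp [hk]
  · rw [sTail_neg _ _ _ h]
    by_cases hk : (k : ℕ) = (m : ℕ) + 1
    · have hk' : k = (⟨(m : ℕ) + 1, by omega⟩ : Fin n) := Fin.ext (by simpa using hk)
      have hv : (m : ℕ) = (k : ℕ) - 1 := by omega
      rw [if_pos hk']
      simp [Prod.ext_iff, Fin.ext_iff, hv]
    · have hk' : ¬ k = (⟨(m : ℕ) + 1, by omega⟩ : Fin n) := by
        simp only [Fin.ext_iff]; simpa using hk
      have hne : ¬ ((Sum.inr (j0, m) : (Fin v') ⊕ (Fin e' × Fin (n-1)))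
          = Sum.inr (j, ⟨(k : ℕ) - 1, by have := k.isLt; omega⟩)) := by
        simp only [Sum.inr.injEq, Prod.ext_iff, Fin.ext_iff]
        rintro ⟨-, h2⟩
        exact hk (by omega)
      simp [hk', hne]

lemma telescope (hn : 2 ≤ n) (w : (Fin v') ⊕ (Fin e' × Fin (n-1))) (j : Fin e') :
    ∑ k : Fin n, inc (sHead head' n) (sTail tail' n) w (j, k)
      = (if w = Sum.inl (head' j) then (1:ℝ) else 0)
        - (if w = Sum.inl (tail' j) then 1 else 0) := by
  simp only [inc, Matrix.of_apply]
  rw [Finset.sum_sub_distrib]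
  match w with
  | Sum.inl y =>
      rw [sum_head_inl head' n hn, sum_tail_inl tail' n hn]
      simp
  | Sum.inr (j0, m) =>
      rw [sum_head_inr head' n hn, sum_tail_inr tail' n hn]
      simp

end sums

lemma idB {v' e' : ℕ} (head' tail' : Fin e' → Fin v') (n : ℕ) (hn : 2 ≤ n)
    (f₁ : Matrix (Fin e' × Fin n) (Fin e') ℝ)
    (hf₁ : ∀ p j, f₁ p j = if p.1 = j then 1 else 0) :
    inc (sHead head' n) (sTail tail' n) * f₁ = Nmat v' e' n * inc head' tail' := by
  ext w j
  have hL : (inc (sHead head' n) (sTail tail' n) * f₁) w j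
      = ∑ k : Fin n, inc (sHead head' n) (sTail tail' n) w (j, k) := by
    rw [Matrix.mul_apply, Fintype.sum_prod_type]
    simp only [hf₁, mul_ite, mul_one, mul_zero]
    rw [Finset.sum_comm]
    simp [Finset.sum_ite_eq']
  rw [hL, telescope head' tail' n hn w j]
  cases w with
  | inl y =>
      simp [Nmat, Matrix.mul_apply, inc, ite_mul, one_mul, zero_mul, Finset.sum_ite_eq']
  | inr q =>
      simp [Nmat, Matrix.mul_apply]

/-- `f₁` intertwines the orthogonal projectors onto the row spaces of the
incidence matrices: `f₁ (∂'⁺ ∂') = (∂⁺ ∂) f₁`. -/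
theorem subdivision_projector_commutes
    (v' e' n : ℕ) (hn : 2 ≤ n) (head' tail' : Fin e' → Fin v')
    (f₁ : Matrix (Fin e' × Fin n) (Fin e') ℝ)
    (hf₁ : ∀ p j, f₁ p j = if p.1 = j then 1 else 0)
    (B : Matrix (Fin e' × Fin n) ((Fin v') ⊕ (Fin e' × Fin (n - 1))) ℝ)
    (hB : IsMP (inc (sHead head' n) (sTail tail' n)) B)
    (B' : Matrix (Fin e') (Fin v') ℝ)
    (hB' : IsMP (inc head' tail') B') :
    f₁ * (B' * inc head' tail') = (B * inc (sHead head' n) (sTail tail' n)) * f₁ := by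
  obtain ⟨h1, h2, h3, h4⟩ := hB
  obtain ⟨h1', h2', h3', h4'⟩ := hB'
  set D := inc (sHead head' n) (sTail tail' n) with hD
  set D' := inc head' tail' with hD'
  have hA : f₁ * D'ᵀ = Dᵀ * Mmat head' tail' n := idA head' tail' n hn f₁ hf₁
  have hN : D * f₁ = Nmat v' e' n * D' := idB head' tail' n hn f₁ hf₁
  have hPD : (B * D) * Dᵀ = Dᵀ := by
    rw [← h4, ← Matrix.transpose_mul, ← Matrix.mul_assoc, h1]
  have hPD' : (B' * D') * D'ᵀ = D'ᵀ := by
    rw [← h4', ← Matrix.transpose_mul, ← Matrix.mul_assoc, h1']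
  have hsym : B * D = Dᵀ * Bᵀ := by rw [← Matrix.transpose_mul, h4]
  have hsym' : B' * D' = D'ᵀ * B'ᵀ := by rw [← Matrix.transpose_mul, h4']
  have step1 : (B * D) * (f₁ * (B' * D')) = f₁ * (B' * D') := by
    calc (B*D) * (f₁ * (B'*D')) = (B*D) * (f₁ * (D'ᵀ * B'ᵀ)) := by rw [← hsym']
    _ = (B*D) * ((f₁ * D'ᵀ) * B'ᵀ) := by simp only [Matrix.mul_assoc]
    _ = (B*D) * ((Dᵀ * Mmat head' tail' n) * B'ᵀ) := by rw [hA]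
    _ = ((B*D) * Dᵀ) * (Mmat head' tail' n * B'ᵀ) := by
          simp only [Matrix.mul_assoc]
    _ = Dᵀ * (Mmat head' tail' n * B'ᵀ) := by rw [hPD]
    _ = (Dᵀ * Mmat head' tail' n) * B'ᵀ := by rw [Matrix.mul_assoc]
    _ = (f₁ * D'ᵀ) * B'ᵀ := by rw [hA]
    _ = f₁ * (D'ᵀ * B'ᵀ) := by rw [Matrix.mul_assoc]
    _ = f₁ * (B'*D') := by rw [hsym']
  have step2t : (B' * D') * (f₁ᵀ * (B * D)) = f₁ᵀ * (B * D) := by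
    calc (B'*D') * (f₁ᵀ * (B*D)) = (B'*D') * (f₁ᵀ * (Dᵀ * Bᵀ)) := by rw [← hsym]
    _ = (B'*D') * ((f₁ᵀ * Dᵀ) * Bᵀ) := by simp only [Matrix.mul_assoc]
    _ = (B'*D') * ((D * f₁)ᵀ * Bᵀ) := by rw [Matrix.transpose_mul]
    _ = (B'*D') * ((Nmat v' e' n * D')ᵀ * Bᵀ) := by rw [hN]
    _ = (B'*D') * ((D'ᵀ * (Nmat v' e' n)ᵀ) * Bᵀ) := by rw [Matrix.transpose_mul]
    _ = ((B'*D') * D'ᵀ) * ((Nmat v' e' n)ᵀ * Bᵀ) := by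
          simp only [Matrix.mul_assoc]
    _ = D'ᵀ * ((Nmat v' e' n)ᵀ * Bᵀ) := by rw [hPD']
    _ = (D'ᵀ * (Nmat v' e' n)ᵀ) * Bᵀ := by rw [Matrix.mul_assoc]
    _ = (Nmat v' e' n * D')ᵀ * Bᵀ := by rw [Matrix.transpose_mul]
    _ = (D * f₁)ᵀ * Bᵀ := by rw [hN]
    _ = (f₁ᵀ * Dᵀ) * Bᵀ := by rw [Matrix.transpose_mul]
    _ = f₁ᵀ * (Dᵀ * Bᵀ) := by rw [Matrix.mul_assoc]
    _ = f₁ᵀ * (B*D) := by rw [hsym]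
  have step2 : ((B*D) * f₁) * (B'*D') = (B*D) * f₁ := by
    have ht := congrArg Matrix.transpose step2t
    simp only [Matrix.transpose_mul, Matrix.transpose_transpose, h4, h4'] at ht
    exact ht
  calc f₁ * (B'*D') = (B*D) * (f₁ * (B'*D')) := step1.symm
  _ = ((B*D) * f₁) * (B'*D') := by simp only [Matrix.mul_assoc]
  _ = (B*D) * f₁ := step2
end

section
/- Let G' be a directed multigraph with incidence matrix ∂', let n ≥ 2, let G be the n-part subdivision of G' with incidence matrix ∂, and let f₁ be the e × e' matrix with f₁ (i,k) j = (if i = j then 1 else 0). Let B be the Moore–Penrose pseudoinverse of ∂ and B' the Moore–Penrose pseudoinverse of ∂'. Then f₁ᵀ * (∂ᵀ * Bᵀ) * f₁ = (n : ℝ) • ((∂')ᵀ * (B')ᵀ). (This is the matrix identity underlying the fact that the junction vertices of a Gaussian topological polymer on G, recentered at their center of mass, are distributed as a Gaussian topological polymer on G' with edge variance multiplied by n: the covariance of the induced edge displacements is n·σ²·P' where P' = (∂')ᵀ·((∂')⁺)ᵀ.) -/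
open Matrix

/-- Potential matrix realizing `f₁ ∂'ᵀ` as `∂ᵀ W`. -/
noncomputable def WMat {v' e' : ℕ} (head' tail' : Fin e' → Fin v') (n : ℕ) :
    Matrix ((Fin v') ⊕ (Fin e' × Fin (n - 1))) (Fin v') ℝ :=
  Matrix.of fun u a => match u with
    | Sum.inl b => (n : ℝ) * (if a = b then 1 else 0)
    | Sum.inr (i, k) => (n : ℝ) * (if a = tail' i then 1 else 0)
        + ((k : ℕ) + 1 : ℝ) * ((if a = head' i then 1 else 0) - (if a = tail' i then 1 else 0))

lemma aux_incT_mul_apply {V E X : Type*} [Fintype V] [DecidableEq V] [Fintype E]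
    (head tail : E → V) (W : Matrix V X ℝ) (j : E) (a : X) :
    ((inc head tail)ᵀ * W) j a = W (head j) a - W (tail j) a := by
  simp [mul_apply, inc, sub_mul, ite_mul, Finset.sum_sub_distrib, Finset.sum_ite_eq']

lemma aux_f1 {v' e' n : ℕ} (f₁ : Matrix (Fin e' × Fin n) (Fin e') ℝ)
    (hf₁ : ∀ p j, f₁ p j = if p.1 = j then 1 else 0) :
    f₁ᵀ * f₁ = (n : ℝ) • (1 : Matrix (Fin e') (Fin e') ℝ) := by
  ext j j'
  simp only [mul_apply, transpose_apply, hf₁, Matrix.smul_apply, one_apply, smul_eq_mul,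
    Fintype.sum_prod_type, ite_mul, one_mul, zero_mul]
  simp [Finset.sum_ite_eq', Finset.sum_ite_eq, mul_comm]
  split_ifs <;> simp

lemma aux_key1 {v' e' n : ℕ} (hn : 2 ≤ n) (head' tail' : Fin e' → Fin v')
    (f₁ : Matrix (Fin e' × Fin n) (Fin e') ℝ)
    (hf₁ : ∀ p j, f₁ p j = if p.1 = j then 1 else 0) :
    inc (sHead head' n) (sTail tail' n) * f₁
      = (Matrix.of fun u a => if u = Sum.inl a then (1:ℝ) else 0) * inc head' tail' := by
  ext u j
  rw [mul_apply]; erw [mul_apply]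
  simp only [hf₁, Fintype.sum_prod_type, mul_ite, mul_one, mul_zero]
  rw [Finset.sum_comm]
  simp only [Finset.sum_ite_eq', Finset.mem_univ, if_true]
  cases u with
  | inl a =>
    have h1 : ∀ k : Fin n, inc (sHead head' n) (sTail tail' n) (Sum.inl a) (j, k)
        = (if k = (⟨n-1, by omega⟩ : Fin n) then (if a = head' j then (1:ℝ) else 0) else 0)
          - (if k = (⟨0, by omega⟩ : Fin n) then (if a = tail' j then (1:ℝ) else 0) else 0) := by
      intro k
      simp only [inc, of_apply, sHead, sTail]
      by_cases hk1 : (k : ℕ) = n - 1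
      · rw [dif_pos hk1, dif_neg (by omega : ¬(k : ℕ) = 0),
          if_pos (Fin.ext hk1 : k = ⟨n-1, by omega⟩),
          if_neg (show ¬ k = ⟨0, by omega⟩ by simp [Fin.ext_iff]; omega)]
        simp
      · rw [dif_neg hk1]
        by_cases hk0 : (k : ℕ) = 0
        · rw [dif_pos hk0, if_neg (show ¬ k = ⟨n-1, by omega⟩ by simp [Fin.ext_iff]; omega),
            if_pos (Fin.ext hk0 : k = ⟨0, by omega⟩)]
          simp
        · rw [dif_neg hk0, if_neg (show ¬ k = ⟨n-1, by omega⟩ by simp [Fin.ext_iff]; omega),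
            if_neg (show ¬ k = ⟨0, by omega⟩ by simp [Fin.ext_iff]; omega)]
          simp
    rw [Finset.sum_congr rfl fun k _ => h1 k, Finset.sum_sub_distrib]
    simp only [Finset.sum_ite_eq', Finset.mem_univ, if_true]
    simp [inc, of_apply, Sum.inl.injEq, ite_mul, one_mul, zero_mul, Finset.sum_ite_eq']
  | inr q =>
    obtain ⟨i, m⟩ := q
    have hm := m.isLt
    have h1 : ∀ k : Fin n, inc (sHead head' n) (sTail tail' n) (Sum.inr (i, m)) (j, k)
        = (if i = j ∧ k = (⟨m.val, by omega⟩ : Fin n) then (1:ℝ) else 0)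
          - (if i = j ∧ k = (⟨m.val + 1, by omega⟩ : Fin n) then (1:ℝ) else 0) := by
      intro k
      simp only [inc, of_apply, sHead, sTail]
      by_cases hk1 : (k : ℕ) = n - 1
      · rw [dif_pos hk1, dif_neg (by omega : ¬(k : ℕ) = 0)]
        simp only [Prod.mk.injEq, Fin.ext_iff, Sum.inr.injEq, Sum.inl.injEq, reduceCtorEq,
          if_false]
        split_ifs <;> (try norm_num) <;> (exfalso; omega)
      · rw [dif_neg hk1]
        by_cases hk0 : (k : ℕ) = 0
        · rw [dif_pos hk0]
          simp only [Prod.mk.injEq, Fin.ext_iff, Sum.inr.injEq, Sum.inl.injEq, reduceCtorEq,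
            if_false]
          split_ifs <;> (try norm_num) <;> (exfalso; omega)
        · rw [dif_neg hk0]
          simp only [Prod.mk.injEq, Fin.ext_iff, Sum.inr.injEq, Sum.inl.injEq, reduceCtorEq,
            if_false]
          split_ifs <;> (try norm_num) <;> (exfalso; omega)
    rw [Finset.sum_congr rfl fun k _ => h1 k, Finset.sum_sub_distrib]
    by_cases hij : i = j <;>
      simp [hij, Finset.sum_ite_eq', inc, of_apply, ite_mul, one_mul, zero_mul]

lemma aux_key2 {v' e' n : ℕ} (hn : 2 ≤ n) (head' tail' : Fin e' → Fin v')
    (f₁ : Matrix (Fin e' × Fin n) (Fin e') ℝ)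
    (hf₁ : ∀ p j, f₁ p j = if p.1 = j then 1 else 0) :
    (inc (sHead head' n) (sTail tail' n))ᵀ * WMat head' tail' n
      = f₁ * (inc head' tail')ᵀ := by
  ext p a
  obtain ⟨i, k⟩ := p
  rw [aux_incT_mul_apply]
  have hrhs : (f₁ * (inc head' tail')ᵀ) (i, k) a
      = (if a = head' i then (1:ℝ) else 0) - (if a = tail' i then 1 else 0) := by
    simp [mul_apply, hf₁, inc, ite_mul, Finset.sum_ite_eq']
  rw [hrhs]
  have hk := k.isLt
  by_cases hk1 : (k : ℕ) = n - 1
  · by_cases hk0 : (k : ℕ) = 0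
    · omega
    · simp only [sHead, sTail, dif_pos hk1, dif_neg hk0, WMat, of_apply]
      have hc : (((⟨(k:ℕ) - 1, by omega⟩ : Fin (n-1)) : ℕ) : ℝ) + 1 = (n : ℝ) - 1 := by
        have : ((⟨(k:ℕ) - 1, by omega⟩ : Fin (n-1)) : ℕ) = n - 2 := by simp; omega
        rw [this]
        have h2 : ((n - 2 : ℕ) : ℝ) = (n : ℝ) - 2 := by
          push_cast [Nat.cast_sub (by omega : 2 ≤ n)]; ring
        rw [h2]; ring
      rw [hc]; ring
  · by_cases hk0 : (k : ℕ) = 0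
    · simp only [sHead, sTail, dif_neg hk1, dif_pos hk0, WMat, of_apply]
      have hc : (((⟨(k:ℕ), by omega⟩ : Fin (n-1)) : ℕ) : ℝ) + 1 = 1 := by simp [hk0]
      rw [hc]; ring
    · simp only [sHead, sTail, dif_neg hk1, dif_neg hk0, WMat, of_apply]
      have hc1 : (((⟨(k:ℕ), by omega⟩ : Fin (n-1)) : ℕ) : ℝ) = (k : ℕ) := by simp
      have hc2 : (((⟨(k:ℕ) - 1, by omega⟩ : Fin (n-1)) : ℕ) : ℝ) = ((k : ℕ) : ℝ) - 1 := by
        simp only [Fin.val_mk]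
        rw [Nat.cast_sub (by omega : 1 ≤ (k:ℕ))]; norm_num
      rw [hc1, hc2]; ring

/-- The covariance identity behind the fact that the junction vertices of a
Gaussian polymer on the subdivision are a Gaussian polymer on the structure
graph with edge variance multiplied by `n`: `f₁ᵀ P f₁ = n P'`. -/
theorem subdivision_covariance_identity
    (v' e' n : ℕ) (hn : 2 ≤ n) (head' tail' : Fin e' → Fin v')
    (f₁ : Matrix (Fin e' × Fin n) (Fin e') ℝ)
    (hf₁ : ∀ p j, f₁ p j = if p.1 = j then 1 else 0)
    (B : Matrix (Fin e' × Fin n) ((Fin v') ⊕ (Fin e' × Fin (n - 1))) ℝ)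
    (hB : IsMP (inc (sHead head' n) (sTail tail' n)) B)
    (B' : Matrix (Fin e') (Fin v') ℝ)
    (hB' : IsMP (inc head' tail') B') :
    f₁ᵀ * ((inc (sHead head' n) (sTail tail' n))ᵀ * Bᵀ) * f₁
      = (n : ℝ) • ((inc head' tail')ᵀ * B'ᵀ) := by
  set D := inc (sHead head' n) (sTail tail' n) with hD
  set D' := inc head' tail' with hD'
  set g : Matrix ((Fin v') ⊕ (Fin e' × Fin (n - 1))) (Fin v') ℝ :=
    Matrix.of fun u a => if u = Sum.inl a then (1:ℝ) else 0 with hgdef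
  obtain ⟨hB1, hB2, hB3, hB4⟩ := hB
  obtain ⟨hB'1, hB'2, hB'3, hB'4⟩ := hB'
  have hg : D * f₁ = g * D' := aux_key1 hn head' tail' f₁ hf₁
  have hw : Dᵀ * WMat head' tail' n = f₁ * D'ᵀ := aux_key2 hn head' tail' f₁ hf₁
  have hff : f₁ᵀ * f₁ = (n : ℝ) • (1 : Matrix (Fin e') (Fin e') ℝ) := aux_f1 (v' := v') f₁ hf₁
  have hPsym : Dᵀ * Bᵀ = B * D := by rw [← Matrix.transpose_mul]; exact hB4
  have hP'sym : D'ᵀ * B'ᵀ = B' * D' := by rw [← Matrix.transpose_mul]; exact hB'4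
  have h5 : Dᵀ * Bᵀ * Dᵀ = Dᵀ := by
    conv_rhs => rw [← hB1]
    rw [Matrix.transpose_mul, Matrix.transpose_mul, Matrix.mul_assoc]
  have step2 : (Dᵀ * Bᵀ) * f₁ = ((Dᵀ * Bᵀ) * f₁) * (D'ᵀ * B'ᵀ) := by
    rw [hPsym, hP'sym, Matrix.mul_assoc B D f₁, hg]
    calc B * (g * D') = B * (g * (D' * B' * D')) := by rw [hB'1]
      _ = B * (g * D') * (B' * D') := by
          simp only [Matrix.mul_assoc]
  have step3 : ((Dᵀ * Bᵀ) * f₁) * (D'ᵀ * B'ᵀ) = f₁ * (D'ᵀ * B'ᵀ) := by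
    calc ((Dᵀ * Bᵀ) * f₁) * (D'ᵀ * B'ᵀ)
        = (Dᵀ * Bᵀ) * (f₁ * D'ᵀ) * B'ᵀ := by simp only [Matrix.mul_assoc]
      _ = (Dᵀ * Bᵀ) * (Dᵀ * WMat head' tail' n) * B'ᵀ := by rw [hw]
      _ = (Dᵀ * Bᵀ * Dᵀ) * WMat head' tail' n * B'ᵀ := by simp only [Matrix.mul_assoc]
      _ = Dᵀ * WMat head' tail' n * B'ᵀ := by rw [h5]
      _ = f₁ * D'ᵀ * B'ᵀ := by rw [hw]
      _ = f₁ * (D'ᵀ * B'ᵀ) := by rw [Matrix.mul_assoc]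
  have step4 : (Dᵀ * Bᵀ) * f₁ = f₁ * (D'ᵀ * B'ᵀ) := step2.trans step3
  rw [Matrix.mul_assoc, step4, ← Matrix.mul_assoc, hff, Matrix.smul_mul, Matrix.one_mul]
end

section
/- Let G be a directed multigraph with v vertices, e edges, and incidence matrix ∂, let B be the Moore–Penrose pseudoinverse of ∂, and set L⁺ = Bᵀ * B and P₀ = ∂ᵀ * Bᵀ (the orthogonal projector onto the column space of ∂ᵀ). Suppose S ∈ Matrix (Fin e) (Fin e) ℝ satisfies S * Sᵀ = 1 (S is orthogonal) and S * P₀ = P₀ * S. Then Bᵀ * S * ∂ᵀ * L⁺ * ∂ * Sᵀ * B = L⁺. (This is the covariance computation showing that if X is distributed as a Gaussian topological polymer with covariance σ²·L⁺ ⊗ I_d, then the embedding X^S obtained by permuting edge displacements by any such S has the same distribution.) -/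
open Matrix

/-- Invariance of the covariance `L⁺` under an orthogonal matrix `S` commuting
with the projector `P₀ = ∂ᵀ (∂⁺)ᵀ`. -/
theorem covariance_invariance_under_edge_permutation
    (v e : ℕ) (head tail : Fin e → Fin v)
    (B : Matrix (Fin e) (Fin v) ℝ) (hB : IsMP (inc head tail) B)
    (S : Matrix (Fin e) (Fin e) ℝ) (hS : S * Sᵀ = 1)
    (hcomm : S * ((inc head tail)ᵀ * Bᵀ) = ((inc head tail)ᵀ * Bᵀ) * S) :
    Bᵀ * S * (inc head tail)ᵀ * (Bᵀ * B) * inc head tail * Sᵀ * B = Bᵀ * B := by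
  obtain ⟨h1, h2, h3, h4⟩ := hB
  set A := inc head tail with hA
  have hP : Aᵀ * Bᵀ = B * A := by rw [← transpose_mul, h4]
  have hc : S * (B * A) = B * A * S := by rw [← hP]; exact hcomm
  calc Bᵀ * S * Aᵀ * (Bᵀ * B) * A * Sᵀ * B
      = Bᵀ * ((S * (Aᵀ * Bᵀ)) * (B * A * (Sᵀ * B))) := by
        simp only [Matrix.mul_assoc]
    _ = Bᵀ * ((B * A) * ((S * (B * A)) * (Sᵀ * B))) := by
        rw [hcomm, hP]; simp only [Matrix.mul_assoc]
    _ = Bᵀ * ((B * A) * ((B * A) * ((S * Sᵀ) * B))) := by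
        rw [hc]; simp only [Matrix.mul_assoc]
    _ = Bᵀ * (B * (A * B * A) * B) := by
        rw [hS]; simp only [Matrix.one_mul, Matrix.mul_assoc]
    _ = Bᵀ * B := by rw [h1, h2]
end

section
/- Let G be a connected directed multigraph with v vertices and graph Laplacian L = ∂ * ∂ᵀ, let ω : Fin v → ℝ be positive weights with D = diagonal ω, J the v × v all-ones matrix, and Q = (1/trace D) • ( D - (1/trace D) • (D * J * D) ). Let 𝓛_ω = D^(-1/2) * L * D^(-1/2) be the weighted graph Laplacian, let M be the Moore–Penrose pseudoinverse of 𝓛_ω, and let L⁺ be the Moore–Penrose pseudoinverse of L. Then trace(M) = (trace D) · trace(Q * L⁺). (Equivalently: for X distributed as a Gaussian topological polymer on G in ℝ^d with edge variance σ², the expected weighted radius of gyration is ⟨Rg²(X, ω)⟩ = (d·σ²/Σᵢ ω i) · trace(𝓛_ω⁺).) -/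
open Matrix

/-- Uniqueness of the Moore–Penrose pseudoinverse. -/
theorem mp_unique {l m : Type*} [Fintype l] [Fintype m] {A : Matrix l m ℝ}
    {B C : Matrix m l ℝ} (hB : IsMP A B) (hC : IsMP A C) : B = C := by
  obtain ⟨b1, b2, b3, b4⟩ := hB
  obtain ⟨c1, c2, c3, c4⟩ := hC
  have hAB : A * B = A * C := by
    calc A * B = (A * B)ᵀ := b3.symm
    _ = Bᵀ * Aᵀ := by rw [Matrix.transpose_mul]
    _ = Bᵀ * (A * C * A)ᵀ := by rw [c1]
    _ = Bᵀ * (Aᵀ * (A * C)ᵀ) := by rw [Matrix.transpose_mul]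
    _ = (Bᵀ * Aᵀ) * (A * C) := by rw [c3, Matrix.mul_assoc]
    _ = (A * B)ᵀ * (A * C) := by rw [Matrix.transpose_mul]
    _ = A * B * (A * C) := by rw [b3]
    _ = A * C := by rw [← Matrix.mul_assoc, b1]
  have hBA : B * A = C * A := by
    calc B * A = (B * A)ᵀ := b4.symm
    _ = Aᵀ * Bᵀ := by rw [Matrix.transpose_mul]
    _ = (A * C * A)ᵀ * Bᵀ := by rw [c1]
    _ = ((C * A)ᵀ * Aᵀ) * Bᵀ := by rw [Matrix.mul_assoc A, Matrix.transpose_mul]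
    _ = (C * A) * (Aᵀ * Bᵀ) := by rw [c4, Matrix.mul_assoc]
    _ = (C * A) * (B * A)ᵀ := by rw [Matrix.transpose_mul]
    _ = (C * A) * (B * A) := by rw [b4]
    _ = C * A := by rw [Matrix.mul_assoc, ← Matrix.mul_assoc A B A, b1]
  calc B = B * A * B := b2.symm
  _ = C * A * B := by rw [hBA]
  _ = C * (A * B) := by rw [Matrix.mul_assoc]
  _ = C * (A * C) := by rw [hAB]
  _ = C * A * C := by rw [Matrix.mul_assoc]
  _ = C := c2

theorem incT_mulVec {V E : Type*} [Fintype V] [DecidableEq V] (head tail : E → V)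
    (x : V → ℝ) (j : E) : ((inc head tail)ᵀ *ᵥ x) j = x (head j) - x (tail j) := by
  simp [inc, Matrix.mulVec, dotProduct, sub_mul, Finset.sum_sub_distrib, ite_mul]

theorem kernel_const {V E : Type*} [Fintype V] [Fintype E] [DecidableEq V]
    (head tail : E → V) (hconn : Conn head tail) (x : V → ℝ)
    (hx : (inc head tail * (inc head tail)ᵀ) *ᵥ x = 0) : ∀ a b, x a = x b := by
  set y := (inc head tail)ᵀ *ᵥ x with hy
  have h0 : y ⬝ᵥ y = 0 := by
    have h1 : x ⬝ᵥ ((inc head tail * (inc head tail)ᵀ) *ᵥ x) = y ⬝ᵥ y := by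
      rw [← Matrix.mulVec_mulVec, Matrix.dotProduct_mulVec, ← Matrix.mulVec_transpose]
    rw [← h1, hx, dotProduct_zero]
  have hyz : ∀ j, y j = 0 := by
    intro j
    have hnn : ∀ k ∈ Finset.univ, (0:ℝ) ≤ y k * y k := fun k _ => mul_self_nonneg _
    have := (Finset.sum_eq_zero_iff_of_nonneg hnn).mp h0 j (Finset.mem_univ j)
    exact mul_self_eq_zero.mp this
  have hedge : ∀ j, x (head j) = x (tail j) := by
    intro j
    have := hyz j
    rw [hy, incT_mulVec] at this
    linarith
  intro a b
  have h := hconn.2 a b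
  induction h with
  | refl => rfl
  | tail _ hstep ih =>
      obtain ⟨j, hj | hj⟩ := hstep
      · rw [ih, ← hj.1, ← hj.2, hedge]
      · rw [ih, ← hj.1, ← hj.2, hedge]

/-- Expected weighted radius of gyration and the weighted graph Laplacian:
`tr 𝓛_ω⁺ = (tr D) · tr(Q L⁺)`. -/
theorem weighted_rog_and_weighted_laplacian
    (v e : ℕ) (head tail : Fin e → Fin v) (hconn : Conn head tail)
    (ω : Fin v → ℝ) (hω : ∀ i, 0 < ω i)
    (Lp : Matrix (Fin v) (Fin v) ℝ)
    (hLp : IsMP (inc head tail * (inc head tail)ᵀ) Lp)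
    (M : Matrix (Fin v) (Fin v) ℝ) (hM : IsMP (wLap head tail ω) M) :
    M.trace = (Matrix.diagonal ω).trace *
      (((1 / (Matrix.diagonal ω).trace) •
          (Matrix.diagonal ω - (1 / (Matrix.diagonal ω).trace) •
            (Matrix.diagonal ω * Matrix.of (fun _ _ => (1 : ℝ)) * Matrix.diagonal ω)))
        * Lp).trace := by
  obtain ⟨hne, hconn2⟩ := hconn
  obtain ⟨i0⟩ := hne
  have hvne : ((v : ℝ)) ≠ 0 := Nat.cast_ne_zero.mpr i0.pos.ne'
  set L : Matrix (Fin v) (Fin v) ℝ := inc head tail * (inc head tail)ᵀ with hLdef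
  set Jm : Matrix (Fin v) (Fin v) ℝ := Matrix.of (fun _ _ => (1:ℝ)) with hJmdef
  set D : Matrix (Fin v) (Fin v) ℝ := Matrix.diagonal ω with hDdef
  set S : Matrix (Fin v) (Fin v) ℝ := Matrix.diagonal (fun i => Real.sqrt (ω i)) with hSdef
  set Si : Matrix (Fin v) (Fin v) ℝ := Matrix.diagonal (fun i => (Real.sqrt (ω i))⁻¹) with hSidef
  set t : ℝ := ∑ i, ω i with htdef
  have htpos : 0 < t := Finset.sum_pos (fun i _ => hω i) ⟨i0, Finset.mem_univ i0⟩
  have htne : t ≠ 0 := htpos.ne'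
  obtain ⟨b1, b2, b3, b4⟩ := hLp
  -- basic symmetric matrices
  have hLsym : Lᵀ = L := by rw [hLdef, Matrix.transpose_mul, Matrix.transpose_transpose]
  have hJsym : Jmᵀ = Jm := by ext i j; simp [hJmdef, Matrix.transpose_apply]
  have hSsym : Sᵀ = S := Matrix.diagonal_transpose _
  have hSisym : Siᵀ = Si := Matrix.diagonal_transpose _
  have hDsym : Dᵀ = D := Matrix.diagonal_transpose _
  -- diagonal facts
  have hSiS : Si * S = 1 := by
    rw [hSidef, hSdef, Matrix.diagonal_mul_diagonal]
    rw [show (fun i => (Real.sqrt (ω i))⁻¹ * Real.sqrt (ω i)) = fun _ => (1:ℝ) from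
      funext fun i => inv_mul_cancel₀ (Real.sqrt_ne_zero'.mpr (hω i))]
    exact Matrix.diagonal_one
  have hSSi : S * Si = 1 := by
    rw [hSidef, hSdef, Matrix.diagonal_mul_diagonal]
    rw [show (fun i => Real.sqrt (ω i) * (Real.sqrt (ω i))⁻¹) = fun _ => (1:ℝ) from
      funext fun i => mul_inv_cancel₀ (Real.sqrt_ne_zero'.mpr (hω i))]
    exact Matrix.diagonal_one
  have hSS : S * S = D := by
    rw [hSdef, hDdef, Matrix.diagonal_mul_diagonal]
    ext i j
    rw [Matrix.diagonal_apply, Matrix.diagonal_apply]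
    split <;> simp [Real.mul_self_sqrt (hω i).le]
  have hJDJ : Jm * D * Jm = t • Jm := by
    ext i j
    simp [hJmdef, hDdef, htdef, Matrix.mul_apply, Matrix.diagonal, Finset.sum_ite_eq]
  -- L annihilates constants
  have hLJ : L * Jm = 0 := by
    ext i j
    simp only [hLdef, hJmdef, Matrix.mul_apply, Matrix.zero_apply, Matrix.of_apply, mul_one,
      Matrix.transpose_apply]
    rw [Finset.sum_comm]
    apply Finset.sum_eq_zero; intro k _
    rw [← Finset.mul_sum]
    simp [inc, Finset.sum_sub_distrib]
  have hJL : Jm * L = 0 := by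
    have h := congrArg Matrix.transpose hLJ
    rwa [Matrix.transpose_mul, hLsym, hJsym, Matrix.transpose_zero] at h
  -- symmetry of Lp
  have hLpsym : Lpᵀ = Lp := by
    have hX : L * Lpᵀ = Lp * L := by
      conv_lhs => rw [← hLsym]
      rw [← Matrix.transpose_mul, b4]
    have hY : Lpᵀ * L = L * Lp := by
      conv_lhs => rw [← hLsym]
      rw [← Matrix.transpose_mul, b3]
    have e1 : L * Lpᵀ * L = L := by
      have h := congrArg Matrix.transpose b1
      simp only [Matrix.transpose_mul, hLsym, ← Matrix.mul_assoc] at h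
      exact h
    have e2 : Lpᵀ * L * Lpᵀ = Lpᵀ := by
      have h := congrArg Matrix.transpose b2
      simp only [Matrix.transpose_mul, hLsym, ← Matrix.mul_assoc] at h
      exact h
    have e3 : (L * Lpᵀ)ᵀ = L * Lpᵀ := by rw [hX]; exact b4
    have e4 : (Lpᵀ * L)ᵀ = Lpᵀ * L := by rw [hY]; exact b3
    exact mp_unique ⟨e1, e2, e3, e4⟩ ⟨b1, b2, b3, b4⟩
  have hLLp_eq : L * Lp = Lp * L := by
    calc L * Lp = Lᵀ * Lpᵀ := by rw [hLsym, hLpsym]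
    _ = (Lp * L)ᵀ := (Matrix.transpose_mul _ _).symm
    _ = Lp * L := b4
  -- the projection identity  Lp * L = 1 - v⁻¹ • Jm
  set N : Matrix (Fin v) (Fin v) ℝ := 1 - Lp * L with hNdef
  have hLN : L * N = 0 := by
    rw [hNdef, Matrix.mul_sub, Matrix.mul_one, ← Matrix.mul_assoc, b1, sub_self]
  have hconst : ∀ i i' j, N i j = N i' j := by
    intro i i' j
    have hcol : L *ᵥ (fun i => N i j) = 0 := by
      funext i1
      have h := congrFun (congrFun hLN i1) j
      simpa [Matrix.mul_apply, Matrix.mulVec, dotProduct] using h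
    exact kernel_const head tail ⟨⟨i0⟩, hconn2⟩ _ hcol i i'
  have hNsym : Nᵀ = N := by
    rw [hNdef, Matrix.transpose_sub, Matrix.transpose_one, b4]
  have hNij : ∀ i j, N i j = N i0 i0 := by
    intro i j
    rw [hconst i i0 j]
    have h2 : N i0 j = N j i0 := by
      have h3 := congrFun (congrFun hNsym j) i0
      simpa [Matrix.transpose_apply] using h3
    rw [h2, hconst j i0 i0]
  have hL1 : L *ᵥ (fun _ => (1:ℝ)) = 0 := by
    funext i
    have h := congrFun (congrFun hLJ i) i
    simpa [Matrix.mul_apply, Matrix.mulVec, dotProduct, hJmdef] using h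
  have hval : (v:ℝ) * N i0 i0 = 1 := by
    have hN1 : N *ᵥ (fun _ => (1:ℝ)) = (fun _ => (1:ℝ)) := by
      rw [hNdef, Matrix.sub_mulVec, Matrix.one_mulVec, ← Matrix.mulVec_mulVec, hL1]
      simp
    have h := congrFun hN1 i0
    simp only [Matrix.mulVec, dotProduct, mul_one] at h
    calc (v:ℝ) * N i0 i0 = ∑ _j : Fin v, N i0 i0 := by
          rw [Finset.sum_const, Finset.card_univ]; simp [nsmul_eq_mul]
    _ = ∑ j, N i0 j := Finset.sum_congr rfl (fun j _ => (hNij i0 j).symm)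
    _ = 1 := h
  have hNval : N = (v:ℝ)⁻¹ • Jm := by
    ext i j
    rw [hNij i j]
    have hii : N i0 i0 = (v:ℝ)⁻¹ := by field_simp at hval ⊢; linarith
    simp [hJmdef, hii]
  have hK : Lp * L = 1 - (v:ℝ)⁻¹ • Jm := by
    have h : Lp * L = 1 - N := by rw [hNdef]; abel
    rw [h, hNval]
  have hK2 : L * Lp = 1 - (v:ℝ)⁻¹ • Jm := by rw [hLLp_eq, hK]
  have hJeq : Jm = (v:ℝ) • ((1:Matrix (Fin v) (Fin v) ℝ) - L * Lp) := by
    rw [hK2, sub_sub_cancel, smul_smul, mul_inv_cancel₀ hvne, one_smul]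
  have hJeq' : Jm = (v:ℝ) • ((1:Matrix (Fin v) (Fin v) ℝ) - Lp * L) := by
    rw [hK, sub_sub_cancel, smul_smul, mul_inv_cancel₀ hvne, one_smul]
  have hLpJ : Lp * Jm = 0 := by
    rw [hJeq, mul_smul_comm, Matrix.mul_sub, Matrix.mul_one, ← Matrix.mul_assoc, b2,
      sub_self, smul_zero]
  have hJLp : Jm * Lp = 0 := by
    rw [hJeq', smul_mul_assoc, Matrix.sub_mul, Matrix.one_mul, Matrix.mul_assoc,
      ← Matrix.mul_assoc, b2, sub_self, smul_zero]
  -- associated helper rewriting lemmas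
  have hSiS' : ∀ Y : Matrix (Fin v) (Fin v) ℝ, Si * (S * Y) = Y := fun Y => by
    rw [← Matrix.mul_assoc, hSiS, Matrix.one_mul]
  have hSSi' : ∀ Y : Matrix (Fin v) (Fin v) ℝ, S * (Si * Y) = Y := fun Y => by
    rw [← Matrix.mul_assoc, hSSi, Matrix.one_mul]
  have hSS' : ∀ Y : Matrix (Fin v) (Fin v) ℝ, S * (S * Y) = D * Y := fun Y => by
    rw [← Matrix.mul_assoc, hSS]
  have hLJ' : ∀ Y : Matrix (Fin v) (Fin v) ℝ, L * (Jm * Y) = 0 := fun Y => by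
    rw [← Matrix.mul_assoc, hLJ, Matrix.zero_mul]
  have hJL' : ∀ Y : Matrix (Fin v) (Fin v) ℝ, Jm * (L * Y) = 0 := fun Y => by
    rw [← Matrix.mul_assoc, hJL, Matrix.zero_mul]
  have hJDJ' : ∀ Y : Matrix (Fin v) (Fin v) ℝ, Jm * (D * (Jm * Y)) = t • (Jm * Y) := fun Y => by
    rw [← Matrix.mul_assoc, ← Matrix.mul_assoc, hJDJ, smul_mul_assoc]
  -- the candidate pseudoinverse of the weighted Laplacian
  set X : Matrix (Fin v) (Fin v) ℝ := S * (Jm * S) with hXdef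
  set c : ℝ := 1 / t with hcdef
  set P : Matrix (Fin v) (Fin v) ℝ := 1 - c • X with hPdef
  set Sb : Matrix (Fin v) (Fin v) ℝ := S * (Lp * S) with hSbdef
  set B : Matrix (Fin v) (Fin v) ℝ := P * (Sb * P) with hBdef
  set A : Matrix (Fin v) (Fin v) ℝ := wLap head tail ω with hAdef
  have hA : A = Si * (L * Si) := by
    rw [hAdef]; unfold wLap
    rw [← hSidef, ← hLdef, Matrix.mul_assoc]
  have hXX : X * X = t • X := by
    rw [hXdef]
    calc (S * (Jm * S)) * (S * (Jm * S)) = S * (Jm * (S * (S * (Jm * S)))) := by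
          simp only [Matrix.mul_assoc]
    _ = S * (Jm * (D * (Jm * S))) := by rw [hSS']
    _ = S * (t • (Jm * S)) := by rw [hJDJ']
    _ = t • (S * (Jm * S)) := by rw [mul_smul_comm]
  have hXP : X * P = 0 := by
    rw [hPdef, Matrix.mul_sub, Matrix.mul_one, mul_smul_comm, hXX, smul_smul, hcdef,
      one_div_mul_cancel htne, one_smul, sub_self]
  have hPP : P * P = P := by
    nth_rewrite 1 [hPdef]
    rw [Matrix.sub_mul, Matrix.one_mul, smul_mul_assoc, hXP, smul_zero, sub_zero]
  have hAX : A * X = 0 := by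
    rw [hA, hXdef]
    calc (Si * (L * Si)) * (S * (Jm * S)) = Si * (L * (Si * (S * (Jm * S)))) := by
          simp only [Matrix.mul_assoc]
    _ = Si * (L * (Jm * S)) := by rw [hSiS']
    _ = Si * 0 := by rw [hLJ']
    _ = 0 := by rw [Matrix.mul_zero]
  have hXA : X * A = 0 := by
    rw [hA, hXdef]
    calc (S * (Jm * S)) * (Si * (L * Si)) = S * (Jm * (S * (Si * (L * Si)))) := by
          simp only [Matrix.mul_assoc]
    _ = S * (Jm * (L * Si)) := by rw [hSSi']
    _ = S * 0 := by rw [hJL']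
    _ = 0 := by rw [Matrix.mul_zero]
  have hAP : A * P = A := by
    rw [hPdef, Matrix.mul_sub, Matrix.mul_one, mul_smul_comm, hAX, smul_zero, sub_zero]
  have hPA : P * A = A := by
    rw [hPdef, Matrix.sub_mul, Matrix.one_mul, smul_mul_assoc, hXA, smul_zero, sub_zero]
  have hASb : A * Sb = 1 - (v:ℝ)⁻¹ • (Si * (Jm * S)) := by
    rw [hA, hSbdef]
    calc (Si * (L * Si)) * (S * (Lp * S)) = Si * (L * (Si * (S * (Lp * S)))) := by
          simp only [Matrix.mul_assoc]
    _ = Si * (L * (Lp * S)) := by rw [hSiS']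
    _ = Si * ((L * Lp) * S) := by rw [Matrix.mul_assoc L Lp S]
    _ = Si * ((1 - (v:ℝ)⁻¹ • Jm) * S) := by rw [hK2]
    _ = Si * (S - (v:ℝ)⁻¹ • (Jm * S)) := by rw [Matrix.sub_mul, Matrix.one_mul, smul_mul_assoc]
    _ = Si * S - (v:ℝ)⁻¹ • (Si * (Jm * S)) := by rw [Matrix.mul_sub, mul_smul_comm]
    _ = 1 - (v:ℝ)⁻¹ • (Si * (Jm * S)) := by rw [hSiS]
  have hSiJS_P : (Si * (Jm * S)) * P = 0 := by
    have hmain : (Si * (Jm * S)) * X = t • (Si * (Jm * S)) := by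
      rw [hXdef]
      calc (Si * (Jm * S)) * (S * (Jm * S)) = Si * (Jm * (S * (S * (Jm * S)))) := by
            simp only [Matrix.mul_assoc]
      _ = Si * (Jm * (D * (Jm * S))) := by rw [hSS']
      _ = Si * (t • (Jm * S)) := by rw [hJDJ']
      _ = t • (Si * (Jm * S)) := by rw [mul_smul_comm]
    rw [hPdef, Matrix.mul_sub, Matrix.mul_one, mul_smul_comm, hmain, smul_smul, hcdef,
      one_div_mul_cancel htne, one_smul, sub_self]
  have hAB : A * B = P := by
    calc A * B = ((A * P) * Sb) * P := by rw [hBdef]; simp only [Matrix.mul_assoc]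
    _ = (A * Sb) * P := by rw [hAP]
    _ = (1 - (v:ℝ)⁻¹ • (Si * (Jm * S))) * P := by rw [hASb]
    _ = P - (v:ℝ)⁻¹ • ((Si * (Jm * S)) * P) := by
          rw [Matrix.sub_mul, Matrix.one_mul, smul_mul_assoc]
    _ = P := by rw [hSiJS_P, smul_zero, sub_zero]
  have hSbA : Sb * A = 1 - (v:ℝ)⁻¹ • (S * (Jm * Si)) := by
    rw [hA, hSbdef]
    calc (S * (Lp * S)) * (Si * (L * Si)) = S * (Lp * (S * (Si * (L * Si)))) := by
          simp only [Matrix.mul_assoc]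
    _ = S * (Lp * (L * Si)) := by rw [hSSi']
    _ = S * ((Lp * L) * Si) := by rw [Matrix.mul_assoc Lp L Si]
    _ = S * ((1 - (v:ℝ)⁻¹ • Jm) * Si) := by rw [hK]
    _ = S * (Si - (v:ℝ)⁻¹ • (Jm * Si)) := by rw [Matrix.sub_mul, Matrix.one_mul, smul_mul_assoc]
    _ = S * Si - (v:ℝ)⁻¹ • (S * (Jm * Si)) := by rw [Matrix.mul_sub, mul_smul_comm]
    _ = 1 - (v:ℝ)⁻¹ • (S * (Jm * Si)) := by rw [hSSi]
  have hP_SJSi : P * (S * (Jm * Si)) = 0 := by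
    have hmain : X * (S * (Jm * Si)) = t • (S * (Jm * Si)) := by
      rw [hXdef]
      calc (S * (Jm * S)) * (S * (Jm * Si)) = S * (Jm * (S * (S * (Jm * Si)))) := by
            simp only [Matrix.mul_assoc]
      _ = S * (Jm * (D * (Jm * Si))) := by rw [hSS']
      _ = S * (t • (Jm * Si)) := by rw [hJDJ']
      _ = t • (S * (Jm * Si)) := by rw [mul_smul_comm]
    rw [hPdef, Matrix.sub_mul, Matrix.one_mul, smul_mul_assoc, hmain, smul_smul, hcdef,
      one_div_mul_cancel htne, one_smul, sub_self]
  have hBA : B * A = P := by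
    calc B * A = P * (Sb * (P * A)) := by rw [hBdef]; simp only [Matrix.mul_assoc]
    _ = P * (Sb * A) := by rw [hPA]
    _ = P * (1 - (v:ℝ)⁻¹ • (S * (Jm * Si))) := by rw [hSbA]
    _ = P - (v:ℝ)⁻¹ • (P * (S * (Jm * Si))) := by
          rw [Matrix.mul_sub, Matrix.mul_one, mul_smul_comm]
    _ = P := by rw [hP_SJSi, smul_zero, sub_zero]
  have hPsym : Pᵀ = P := by
    rw [hPdef, Matrix.transpose_sub, Matrix.transpose_one, Matrix.transpose_smul, hXdef,
      Matrix.transpose_mul, Matrix.transpose_mul, hSsym, hJsym, ← Matrix.mul_assoc]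
  have hMP_B : IsMP A B := by
    refine ⟨?_, ?_, ?_, ?_⟩
    · rw [hAB, hPA]
    · rw [hBA]
      nth_rewrite 1 [hBdef]
      rw [← Matrix.mul_assoc, ← Matrix.mul_assoc, hPP, hBdef, Matrix.mul_assoc]
    · rw [hAB, hPsym]
    · rw [hBA, hPsym]
  have hMB : M = B := mp_unique hM hMP_B
  -- trace computation
  have hSPS : S * (P * S) = D - c • (D * (Jm * D)) := by
    have h1 : X * S = S * (Jm * D) := by
      rw [hXdef]
      calc (S * (Jm * S)) * S = S * (Jm * (S * S)) := by simp only [Matrix.mul_assoc]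
      _ = S * (Jm * D) := by rw [hSS]
    rw [hPdef, Matrix.sub_mul, Matrix.one_mul, smul_mul_assoc, h1, Matrix.mul_sub,
      mul_smul_comm, hSS, hSS']
  have htrace : M.trace = ((D - c • (D * (Jm * D))) * Lp).trace := by
    rw [hMB, hBdef]
    calc (P * (Sb * P)).trace = ((Sb * P) * P).trace := by rw [Matrix.trace_mul_comm]
    _ = (Sb * (P * P)).trace := by rw [Matrix.mul_assoc]
    _ = (Sb * P).trace := by rw [hPP]
    _ = (S * ((Lp * S) * P)).trace := by rw [hSbdef, Matrix.mul_assoc]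
    _ = (((Lp * S) * P) * S).trace := by rw [Matrix.trace_mul_comm]
    _ = (Lp * (S * (P * S))).trace := by simp only [Matrix.mul_assoc]
    _ = (Lp * (D - c • (D * (Jm * D)))).trace := by rw [hSPS]
    _ = ((D - c • (D * (Jm * D))) * Lp).trace := by rw [Matrix.trace_mul_comm]
  rw [htrace]
  have hDt : D.trace = t := by rw [hDdef, Matrix.trace_diagonal, htdef]
  rw [hDt, smul_mul_assoc, Matrix.trace_smul, smul_eq_mul, ← mul_assoc t, mul_one_div,
    div_self htne, one_mul, ← hcdef, Matrix.mul_assoc D Jm D]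
end

section
/- Let G be a connected directed multigraph with v vertices and graph Laplacian L, let ω : Fin v → ℝ be positive weights with D = diagonal ω, let 𝓛_ω = D^(-1/2) * L * D^(-1/2), and let M be the Moore–Penrose pseudoinverse of 𝓛_ω. Consider the polynomial p(λ) = det(L - λ·D) (i.e. the determinant of the matrix with polynomial entries L.map C - X • D.map C), and let c₁ = p.coeff 1 and c₂ = p.coeff 2. Then c₁ ≠ 0 and trace(M) = -c₂/c₁. -/
open Matrix

/- ### Auxiliary lemmas -/

open Polynomial

section Aux

variable {n : Type*} [Fintype n] [DecidableEq n]

/-- Uniqueness of the Moore–Penrose pseudoinverse. -/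
lemma aux_mp_unique {A B C : Matrix n n ℝ} (hB : IsMP A B) (hC : IsMP A C) : B = C := by
  obtain ⟨b1, b2, b3, b4⟩ := hB
  obtain ⟨c1, c2, c3, c4⟩ := hC
  have hAB : A * B = A * C := by
    calc A * B = (A * C * A) * B := by rw [c1]
    _ = (A * C) * (A * B) := by noncomm_ring
    _ = (A * C)ᵀ * (A * B)ᵀ := by rw [c3, b3]
    _ = (A * B * (A * C))ᵀ := by rw [← transpose_mul]
    _ = ((A * B * A) * C)ᵀ := by noncomm_ring
    _ = (A * C)ᵀ := by rw [b1]
    _ = A * C := c3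
  have hBA : B * A = C * A := by
    calc B * A = B * (A * C * A) := by rw [c1]
    _ = (B * A) * (C * A) := by noncomm_ring
    _ = (B * A)ᵀ * (C * A)ᵀ := by rw [b4, c4]
    _ = ((C * A) * (B * A))ᵀ := by rw [← transpose_mul]
    _ = (C * (A * B * A))ᵀ := by noncomm_ring
    _ = (C * A)ᵀ := by rw [b1]
    _ = C * A := c4
  calc B = B * A * B := b2.symm
  _ = C * A * B := by rw [hBA]
  _ = C * (A * B) := by rw [mul_assoc]
  _ = C * (A * C) := by rw [hAB]
  _ = C * A * C := by rw [mul_assoc]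
  _ = C := c2

/-- Real spectral theorem, packaged. -/
lemma aux_exists_spectral {A : Matrix n n ℝ} (hA : A.IsHermitian) :
    ∃ (U : Matrix n n ℝ) (μ : n → ℝ),
      Uᵀ * U = 1 ∧ U * Uᵀ = 1 ∧ A = U * diagonal μ * Uᵀ := by
  refine ⟨(hA.eigenvectorUnitary : Matrix n n ℝ), hA.eigenvalues, ?_, ?_, ?_⟩
  · have h := (Matrix.mem_unitaryGroup_iff').mp (hA.eigenvectorUnitary).2
    rwa [star_eq_conjTranspose, conjTranspose_eq_transpose_of_trivial] at h
  · have h := (Matrix.mem_unitaryGroup_iff).mp (hA.eigenvectorUnitary).2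
    rwa [star_eq_conjTranspose, conjTranspose_eq_transpose_of_trivial] at h
  · have h := hA.spectral_theorem
    rwa [Unitary.conjStarAlgAut_apply, star_eq_conjTranspose, conjTranspose_eq_transpose_of_trivial,
      show RCLike.ofReal ∘ hA.eigenvalues = hA.eigenvalues from rfl] at h

lemma aux_conj_mul {U : Matrix n n ℝ} (hU2 : Uᵀ * U = 1) (d d' : n → ℝ) :
    (U * diagonal d * Uᵀ) * (U * diagonal d' * Uᵀ) = U * diagonal (d * d') * Uᵀ := by
  rw [show (U * diagonal d * Uᵀ) * (U * diagonal d' * Uᵀ)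
      = U * diagonal d * (Uᵀ * U) * (diagonal d' * Uᵀ) by noncomm_ring, hU2, mul_one,
    ← mul_assoc, mul_assoc U, diagonal_mul_diagonal]
  rfl

lemma aux_conj_transpose {U : Matrix n n ℝ} (d : n → ℝ) :
    (U * diagonal d * Uᵀ)ᵀ = U * diagonal d * Uᵀ := by
  rw [transpose_mul, transpose_mul, diagonal_transpose, transpose_transpose, mul_assoc]

lemma aux_conj_trace {U : Matrix n n ℝ} (hU2 : Uᵀ * U = 1) (d : n → ℝ) :
    (U * diagonal d * Uᵀ).trace = ∑ i, d i := by
  rw [Matrix.trace_mul_comm, ← mul_assoc, hU2, one_mul, trace_diagonal]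

/-- The natural pseudoinverse of a diagonalized matrix. -/
lemma aux_mp_conj {U : Matrix n n ℝ} (hU2 : Uᵀ * U = 1) (μ : n → ℝ) :
    IsMP (U * diagonal μ * Uᵀ)
      (U * diagonal (fun i => if μ i = 0 then 0 else (μ i)⁻¹) * Uᵀ) := by
  set μ' : n → ℝ := fun i => if μ i = 0 then 0 else (μ i)⁻¹ with hμ'
  have h1 : μ * μ' * μ = μ := by
    funext i; simp only [Pi.mul_apply, hμ']
    by_cases h : μ i = 0 <;> simp [h]
  have h2 : μ' * μ * μ' = μ' := by
    funext i; simp only [Pi.mul_apply, hμ']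
    by_cases h : μ i = 0 <;> simp [h]
  refine ⟨?_, ?_, ?_, ?_⟩
  · rw [aux_conj_mul hU2, aux_conj_mul hU2, h1]
  · rw [aux_conj_mul hU2, aux_conj_mul hU2, h2]
  · rw [aux_conj_mul hU2, aux_conj_transpose]
  · rw [aux_conj_mul hU2, aux_conj_transpose]

/-- A symmetric matrix whose kernel is spanned by a single nonzero vector has a unique
zero eigenvalue. -/
lemma aux_unique_zero_eig {A U : Matrix n n ℝ} {μ : n → ℝ}
    (hU2 : Uᵀ * U = 1) (hU1 : U * Uᵀ = 1) (hspec : A = U * diagonal μ * Uᵀ)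
    {u₀ : n → ℝ} (hu₀ : u₀ ≠ 0) (hAu₀ : A *ᵥ u₀ = 0)
    (hker : ∀ x : n → ℝ, A *ᵥ x = 0 → ∃ c : ℝ, x = c • u₀) :
    ∃! i, μ i = 0 := by
  have hAU : A * U = U * diagonal μ := by
    rw [hspec, mul_assoc, hU2, mul_one]
  have hcol : ∀ j, A *ᵥ (fun k => U k j) = μ j • (fun k => U k j) := by
    intro j
    funext i
    simp only [mulVec, dotProduct, Pi.smul_apply, smul_eq_mul]
    rw [← Matrix.mul_apply, hAU, Matrix.mul_diagonal]
    ring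
  have horth : ∀ i j, ∑ k, U k i * U k j = if i = j then (1:ℝ) else 0 := by
    intro i j
    have := congrFun (congrFun hU2 i) j
    simpa [Matrix.mul_apply, Matrix.one_apply, transpose_apply] using this
  have hex : ∃ i, μ i = 0 := by
    by_contra h
    push_neg at h
    have hdet : IsUnit A.det := by
      have : A.det = ∏ i, μ i := by
        rw [hspec, det_mul, det_mul, det_diagonal, mul_comm (U.det), mul_assoc, ← det_mul, hU1,
          det_one, mul_one]
      rw [this]
      exact (Finset.prod_ne_zero_iff.2 fun i _ => h i).isUnit
    have : u₀ = 0 := by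
      have h2 := congrArg (fun w => A⁻¹ *ᵥ w) hAu₀
      simpa [mulVec_mulVec, Matrix.nonsing_inv_mul A hdet] using h2
    exact hu₀ this
  obtain ⟨i₀, hi₀⟩ := hex
  refine ⟨i₀, hi₀, fun j hj => ?_⟩
  by_contra hne
  obtain ⟨c, hc⟩ := hker _ (by rw [hcol j, hj, zero_smul])
  obtain ⟨d, hd⟩ := hker _ (by rw [hcol i₀, hi₀, zero_smul])
  have h1 : ∑ k, U k j * U k j = 1 := by rw [horth j j]; simp
  have h2 : ∑ k, U k i₀ * U k i₀ = 1 := by rw [horth i₀ i₀]; simp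
  have h3 : ∑ k, U k j * U k i₀ = 0 := by rw [horth j i₀]; simp [hne]
  have e1 : c * c * ∑ k, u₀ k * u₀ k = 1 := by
    rw [← h1, Finset.mul_sum]
    congr 1; funext k
    have := congrFun hc k
    simp only [Pi.smul_apply, smul_eq_mul] at this
    rw [this]; ring
  have e2 : d * d * ∑ k, u₀ k * u₀ k = 1 := by
    rw [← h2, Finset.mul_sum]
    congr 1; funext k
    have := congrFun hd k
    simp only [Pi.smul_apply, smul_eq_mul] at this
    rw [this]; ring
  have e3 : c * d * ∑ k, u₀ k * u₀ k = 0 := by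
    rw [← h3, Finset.mul_sum]
    congr 1; funext k
    have hck := congrFun hc k
    have hdk := congrFun hd k
    simp only [Pi.smul_apply, smul_eq_mul] at hck hdk
    rw [hck, hdk]; ring
  nlinarith [e1, e2, e3]

/-- Determinant of `A - X•1` for a diagonalized matrix. -/
lemma aux_det_sub_smul_conj {U : Matrix n n ℝ} (hU1 : U * Uᵀ = 1) (μ : n → ℝ) :
    ((U * diagonal μ * Uᵀ).map (C : ℝ →+* ℝ[X]) - (X : ℝ[X]) • 1).det
      = ∏ i, (C (μ i) - X) := by
  have key : (U * diagonal μ * Uᵀ).map (C : ℝ →+* ℝ[X]) - (X : ℝ[X]) • 1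
      = U.map C * ((diagonal μ).map C - (X : ℝ[X]) • 1) * (Uᵀ).map C := by
    rw [mul_sub, sub_mul, Matrix.map_mul, Matrix.map_mul]
    congr 1
    rw [mul_smul_comm, smul_mul_assoc, mul_one, ← Matrix.map_mul, hU1]
    congr 1
    ext i j
    simp [Matrix.one_apply, apply_ite]
  rw [key, det_mul, det_mul, mul_comm ((U.map C).det), mul_assoc, ← det_mul, ← Matrix.map_mul,
    hU1]
  have hmid : (diagonal μ).map (C : ℝ →+* ℝ[X]) - (X : ℝ[X]) • 1
      = diagonal (fun i => C (μ i) - X) := by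
    rw [diagonal_map (map_zero _), smul_one_eq_diagonal, diagonal_sub]
  rw [hmid, det_diagonal]
  have h1 : ((1 : Matrix n n ℝ).map (C : ℝ →+* ℝ[X])).det = 1 := by
    have h := (RingHom.map_det (C : ℝ →+* ℝ[X]) (1 : Matrix n n ℝ)).symm
    simp only [RingHom.mapMatrix_apply] at h
    rw [h]
    simp
  rw [h1, mul_one]

end Aux

lemma aux_rcoeff0 {ι : Type*} (s : Finset ι) (a : ι → ℝ) :
    (∏ i ∈ s, (C (a i) - X)).coeff 0 = ∏ i ∈ s, a i := by
  rw [coeff_zero_eq_eval_zero, eval_prod]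
  simp

lemma aux_rcoeff1 {ι : Type*} [DecidableEq ι] (s : Finset ι) (a : ι → ℝ)
    (h : ∀ i ∈ s, a i ≠ 0) :
    (∏ i ∈ s, (C (a i) - X)).coeff 1
      = -((∏ i ∈ s, a i) * ∑ i ∈ s, (a i)⁻¹) := by
  induction s using Finset.induction_on with
  | empty => simp [Polynomial.coeff_one]
  | @insert j s hj ih =>
    rw [Finset.prod_insert hj, Finset.prod_insert hj, Finset.sum_insert hj]
    have hcoeff : ((C (a j) - X) * ∏ i ∈ s, (C (a i) - X)).coeff 1
        = a j * (∏ i ∈ s, (C (a i) - X)).coeff 1 - (∏ i ∈ s, (C (a i) - X)).coeff 0 := by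
      rw [sub_mul, coeff_sub, coeff_C_mul, coeff_X_mul]
    rw [hcoeff, ih (fun i hi => h i (Finset.mem_insert_of_mem hi)), aux_rcoeff0]
    have haj : a j ≠ 0 := h j (Finset.mem_insert_self j s)
    field_simp
    ring

section Graph

variable {v e : ℕ} (head tail : Fin e → Fin v) (ω : Fin v → ℝ)

lemma aux_incT_mulVec (y : Fin v → ℝ) (j : Fin e) :
    ((inc head tail)ᵀ *ᵥ y) j = y (head j) - y (tail j) := by
  simp only [mulVec, dotProduct, transpose_apply, inc, Matrix.of_apply]
  rw [Finset.sum_congr rfl (fun i _ => show ((if i = head j then (1:ℝ) else 0)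
      - if i = tail j then 1 else 0) * y i
      = (if i = head j then y i else 0) - (if i = tail j then y i else 0) from by
      split <;> split <;> ring)]
  rw [Finset.sum_sub_distrib, Finset.sum_ite_eq', Finset.sum_ite_eq']
  simp

lemma aux_const_of_conn (hconn : Conn head tail) (y : Fin v → ℝ)
    (hy : ∀ j, y (head j) = y (tail j)) (a b : Fin v) : y a = y b := by
  have h := hconn.2 a b
  induction h with
  | refl => rfl
  | tail hab hbc ih =>
    obtain ⟨j, hj⟩ := hbc
    rcases hj with ⟨h1, h2⟩ | ⟨h1, h2⟩
    · rw [ih, ← h1, ← h2, hy]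
    · rw [ih, ← h1, ← h2, hy]

lemma aux_ker_wlap (hconn : Conn head tail) (hω : ∀ i, 0 < ω i)
    (x : Fin v → ℝ)
    (hx : (diagonal (fun i => (Real.sqrt (ω i))⁻¹) * (inc head tail * (inc head tail)ᵀ) *
      diagonal (fun i => (Real.sqrt (ω i))⁻¹)) *ᵥ x = 0) :
    ∃ c : ℝ, x = c • fun i => Real.sqrt (ω i) := by
  set B := inc head tail with hB
  set s : Fin v → ℝ := fun i => (Real.sqrt (ω i))⁻¹ with hs
  set y : Fin v → ℝ := fun i => s i * x i with hy
  have hsqrt : ∀ i, Real.sqrt (ω i) ≠ 0 := fun i => ne_of_gt (Real.sqrt_pos.2 (hω i))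
  set w : Fin e → ℝ := Bᵀ *ᵥ y with hw
  have hyv : diagonal s *ᵥ x = y := by
    funext i; simp [mulVec_diagonal, hy]
  have hdot : x ⬝ᵥ ((diagonal s * (B * Bᵀ) * diagonal s) *ᵥ x) = w ⬝ᵥ w := by
    rw [← mulVec_mulVec, ← mulVec_mulVec, hyv, dotProduct_mulVec]
    have hxy : x ᵥ* diagonal s = y := by
      funext i; simp [vecMul_diagonal, hy, mul_comm]
    rw [hxy, ← mulVec_mulVec, dotProduct_mulVec, ← mulVec_transpose, ← hw]
  have hw0 : w = 0 := by
    have h0 : w ⬝ᵥ w = 0 := by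
      rw [← hdot, hx, dotProduct_zero]
    funext j
    have hnn : ∀ k ∈ Finset.univ, 0 ≤ w k * w k := fun k _ => mul_self_nonneg _
    have := (Finset.sum_eq_zero_iff_of_nonneg hnn).1 h0 j (Finset.mem_univ j)
    simpa [mul_self_eq_zero] using this
  have hyconst : ∀ j, y (head j) = y (tail j) := by
    intro j
    have := congrFun hw0 j
    rw [hw, aux_incT_mulVec] at this
    simpa [sub_eq_zero] using this
  obtain ⟨a₀⟩ := hconn.1
  refine ⟨y a₀, ?_⟩
  funext i
  have hconst := aux_const_of_conn head tail hconn y hyconst a₀ i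
  have : x i = Real.sqrt (ω i) * y i := by
    rw [hy, hs]; simp only []
    rw [← mul_assoc, mul_inv_cancel₀ (hsqrt i), one_mul]
  rw [this, ← hconst]
  simp [mul_comm]

end Graph

/-- Computation of `tr 𝓛_ω⁺` from coefficients of `det(L - λ D)`. -/
theorem trace_pseudoinverse_from_char_poly
    (v e : ℕ) (head tail : Fin e → Fin v) (hconn : Conn head tail)
    (ω : Fin v → ℝ) (hω : ∀ i, 0 < ω i)
    (M : Matrix (Fin v) (Fin v) ℝ) (hM : IsMP (wLap head tail ω) M) :
    let p : Polynomial ℝ :=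
      ((inc head tail * (inc head tail)ᵀ).map Polynomial.C
        - (Polynomial.X : Polynomial ℝ) • (Matrix.diagonal ω).map Polynomial.C).det
    p.coeff 1 ≠ 0 ∧ M.trace = -(p.coeff 2) / (p.coeff 1) := by
  intro p
  have hsqrt : ∀ i, Real.sqrt (ω i) ≠ 0 := fun i => ne_of_gt (Real.sqrt_pos.2 (hω i))
  set B := inc head tail with hB
  set L : Matrix (Fin v) (Fin v) ℝ := B * Bᵀ with hL
  set s : Fin v → ℝ := fun i => (Real.sqrt (ω i))⁻¹ with hs
  set A : Matrix (Fin v) (Fin v) ℝ := diagonal s * L * diagonal s with hA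
  have hwlap : wLap head tail ω = A := rfl
  rw [hwlap] at hM
  -- A is symmetric
  have hherm : A.IsHermitian := by
    rw [Matrix.IsHermitian, conjTranspose_eq_transpose_of_trivial, hA, transpose_mul,
      transpose_mul, diagonal_transpose, hL, transpose_mul, transpose_transpose, mul_assoc]
  obtain ⟨U, μ, hU2, hU1, hspec⟩ := aux_exists_spectral hherm
  -- kernel facts
  set u₀ : Fin v → ℝ := fun i => Real.sqrt (ω i) with hu₀
  have hu₀ne : u₀ ≠ 0 := by
    obtain ⟨i⟩ := hconn.1
    intro h
    exact hsqrt i (congrFun h i)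
  have hAu₀ : A *ᵥ u₀ = 0 := by
    have h1 : diagonal s *ᵥ u₀ = fun _ => (1:ℝ) := by
      funext i
      simp only [mulVec_diagonal, hs, hu₀]
      exact inv_mul_cancel₀ (hsqrt i)
    have h2 : Bᵀ *ᵥ (fun _ => (1:ℝ)) = 0 := by
      funext j
      rw [hB, aux_incT_mulVec]
      simp
    rw [hA, ← mulVec_mulVec, h1, hL, ← mulVec_mulVec, ← mulVec_mulVec, h2]
    simp
  have hker : ∀ x : Fin v → ℝ, A *ᵥ x = 0 → ∃ c : ℝ, x = c • u₀ :=
    fun x hx => aux_ker_wlap head tail ω hconn hω x hx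
  obtain ⟨i₀, hi₀, huniq⟩ := aux_unique_zero_eig hU2 hU1 hspec hu₀ne hAu₀ hker
  have hμne : ∀ i ∈ Finset.univ.erase i₀, μ i ≠ 0 := by
    intro i hi hzero
    exact (Finset.mem_erase.1 hi).1 (huniq i hzero)
  -- the polynomial p
  set S' : Matrix (Fin v) (Fin v) ℝ := diagonal u₀ with hS'
  have hS'S : S' * diagonal s = 1 := by
    rw [hS', diagonal_mul_diagonal,
      show (fun i => u₀ i * s i) = fun _ => (1:ℝ) from funext fun i => mul_inv_cancel₀ (hsqrt i),
      diagonal_one]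
  have hSS' : diagonal s * S' = 1 := by
    rw [hS', diagonal_mul_diagonal,
      show (fun i => s i * u₀ i) = fun _ => (1:ℝ) from funext fun i => inv_mul_cancel₀ (hsqrt i),
      diagonal_one]
  have hS'S' : S' * S' = diagonal ω := by
    rw [hS', diagonal_mul_diagonal,
      show (fun i => u₀ i * u₀ i) = ω from funext fun i => Real.mul_self_sqrt (hω i).le]
  have hS'A : S' * A * S' = L := by
    rw [hA, show S' * (diagonal s * L * diagonal s) * S'
      = (S' * diagonal s) * L * (diagonal s * S') by noncomm_ring, hS'S, hSS', one_mul, mul_one]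
  have key : L.map (Polynomial.C : ℝ →+* ℝ[X]) - (X : ℝ[X]) • (diagonal ω).map Polynomial.C
      = S'.map Polynomial.C * (A.map Polynomial.C - (X : ℝ[X]) • 1) * S'.map Polynomial.C := by
    rw [mul_sub, sub_mul, ← Matrix.map_mul, ← Matrix.map_mul, hS'A]
    congr 1
    rw [mul_smul_comm, smul_mul_assoc, mul_one, ← Matrix.map_mul, hS'S']
  have hdetS' : S'.det = ∏ i, Real.sqrt (ω i) := by
    rw [hS', det_diagonal]
  have hP : p = Polynomial.C (∏ i, ω i) * ∏ i, (Polynomial.C (μ i) - X) := by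
    show (L.map Polynomial.C - (X : ℝ[X]) • (diagonal ω).map Polynomial.C).det = _
    rw [key, det_mul, det_mul]
    have hm : (S'.map (Polynomial.C : ℝ →+* ℝ[X])).det = Polynomial.C (∏ i, Real.sqrt (ω i)) := by
      have h := (RingHom.map_det (Polynomial.C : ℝ →+* ℝ[X]) S').symm
      simp only [RingHom.mapMatrix_apply] at h
      rw [h, hdetS']
    rw [hm, hspec, aux_det_sub_smul_conj hU1 μ]
    rw [mul_comm, ← mul_assoc, ← Polynomial.C_mul, ← Finset.prod_mul_distrib,
      show (∏ i, Real.sqrt (ω i) * Real.sqrt (ω i)) = ∏ i, ω i from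
        Finset.prod_congr rfl fun i _ => Real.mul_self_sqrt (hω i).le]
  -- coefficients
  set P : ℝ := ∏ i ∈ Finset.univ.erase i₀, μ i with hPd
  set Sm : ℝ := ∑ i ∈ Finset.univ.erase i₀, (μ i)⁻¹ with hSm
  have hQ : (∏ i, (Polynomial.C (μ i) - X))
      = -(X * ∏ i ∈ Finset.univ.erase i₀, (Polynomial.C (μ i) - X)) := by
    rw [← Finset.mul_prod_erase Finset.univ _ (Finset.mem_univ i₀), hi₀]
    simp [neg_mul]
  have hr0 : (∏ i ∈ Finset.univ.erase i₀, (Polynomial.C (μ i) - X)).coeff 0 = P :=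
    aux_rcoeff0 _ _
  have hr1 : (∏ i ∈ Finset.univ.erase i₀, (Polynomial.C (μ i) - X)).coeff 1 = -(P * Sm) :=
    aux_rcoeff1 _ _ hμne
  have hPne : P ≠ 0 := Finset.prod_ne_zero_iff.2 hμne
  have hωprod : (∏ i, ω i) ≠ 0 := Finset.prod_ne_zero_iff.2 fun i _ => ne_of_gt (hω i)
  have hc1 : p.coeff 1 = (∏ i, ω i) * (-P) := by
    rw [hP, hQ, Polynomial.coeff_C_mul, Polynomial.coeff_neg,
      show (1:ℕ) = 0 + 1 from rfl, Polynomial.coeff_X_mul, hr0]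
  have hc2 : p.coeff 2 = (∏ i, ω i) * (P * Sm) := by
    rw [hP, hQ, Polynomial.coeff_C_mul, Polynomial.coeff_neg,
      show (2:ℕ) = 1 + 1 from rfl, Polynomial.coeff_X_mul, hr1]
    ring
  constructor
  · rw [hc1]
    exact mul_ne_zero hωprod (neg_ne_zero.2 hPne)
  -- trace of M
  have hMeq : M = U * diagonal (fun i => if μ i = 0 then 0 else (μ i)⁻¹) * Uᵀ := by
    rw [hspec] at hM
    exact aux_mp_unique hM (aux_mp_conj hU2 μ)
  have htr : M.trace = Sm := by
    rw [hMeq, aux_conj_trace hU2, hSm,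
      ← Finset.add_sum_erase Finset.univ _ (Finset.mem_univ i₀)]
    rw [if_pos hi₀, zero_add]
    exact Finset.sum_congr rfl fun i hi => if_neg (hμne i hi)
  rw [htr, hc1, hc2]
  field_simp
end

section
/- Let n ≥ 2, let Y be the 3-star directed multigraph with 4 vertices (vertex 0 the center and three edges j ∈ Fin 3 with tail 0 and head j+1), and let G be the n-part subdivision of Y, so G has v = 3n + 1 vertices. Let M be the Moore–Penrose pseudoinverse of the graph Laplacian L(G). Then the contraction factor g(G) = 6·trace(M)/(v² - 1) satisfies g(G) = (7n² + 9n + 2)/(9n² + 9n + 2); equivalently, trace(M) = n·(n+1)·(7n+2)/(2·(3n+1)). -/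
open Matrix

set_option maxHeartbeats 1000000

namespace StarAux

-- Uniqueness of Moore-Penrose pseudoinverse
theorem mp_unique {l m : Type*} [Fintype l] [Fintype m]
    (A : Matrix l m ℝ) (B C : Matrix m l ℝ) (hB : IsMP A B) (hC : IsMP A C) : B = C := by
  obtain ⟨hB1, hB2, hB3, hB4⟩ := hB
  obtain ⟨hC1, hC2, hC3, hC4⟩ := hC
  have hAB : A * B = A * C := by
    calc A * B = (A * C * A) * B := by rw [hC1]
    _ = (A * C) * (A * B) := by simp only [Matrix.mul_assoc]
    _ = (A * C)ᵀ * (A * B)ᵀ := by rw [hC3, hB3]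
    _ = ((A * B) * (A * C))ᵀ := (Matrix.transpose_mul _ _).symm
    _ = ((A * B * A) * C)ᵀ := by simp only [Matrix.mul_assoc]
    _ = (A * C)ᵀ := by rw [hB1]
    _ = A * C := hC3
  have hBA : B * A = C * A := by
    calc B * A = B * (A * C * A) := by rw [hC1]
    _ = (B * A) * (C * A) := by simp only [Matrix.mul_assoc]
    _ = (B * A)ᵀ * (C * A)ᵀ := by rw [hB4, hC4]
    _ = ((C * A) * (B * A))ᵀ := (Matrix.transpose_mul _ _).symm
    _ = (C * (A * B * A))ᵀ := by simp only [Matrix.mul_assoc]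
    _ = (C * A)ᵀ := by rw [hB1]
    _ = C * A := hC4
  calc B = B * A * B := hB2.symm
  _ = C * A * B := by rw [hBA]
  _ = C * (A * B) := by rw [Matrix.mul_assoc]
  _ = C * (A * C) := by rw [hAB]
  _ = C * A * C := by rw [Matrix.mul_assoc]
  _ = C := hC2


/-- vertex type of subdivided 3-star -/
abbrev SV (n : ℕ) := (Fin 4) ⊕ (Fin 3 × Fin (n - 1))

def leg {n : ℕ} : SV n → Option (Fin 3)
  | Sum.inl x => if h : x.val = 0 then none else some ⟨x.val - 1, by omega⟩
  | Sum.inr p => some p.1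

def dv (n : ℕ) : SV n → ℕ
  | Sum.inl x => if x.val = 0 then 0 else n
  | Sum.inr p => p.2.val + 1

def pt (n : ℕ) (i : Fin 3) (k : ℕ) : SV n :=
  if h0 : k = 0 then Sum.inl 0
  else if h : k < n then Sum.inr (i, ⟨k - 1, by omega⟩) else Sum.inl ⟨i.val + 1, by omega⟩

lemma leg_pt {n : ℕ} (i : Fin 3) {k : ℕ} (hk1 : 1 ≤ k) (hk : k ≤ n) :
    leg (pt n i k) = some i := by
  unfold pt
  rcases eq_or_lt_of_le hk with h | h
  · simp only [dif_neg (by omega : ¬ k = 0), dif_neg (by omega : ¬ k < n), leg]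
    have : i.val + 1 ≠ 0 := by omega
    simp [this]
  · simp [dif_neg (by omega : ¬ k = 0), dif_pos h, leg]

lemma dv_pt {n : ℕ} (i : Fin 3) {k : ℕ} (hk : k ≤ n) : dv n (pt n i k) = k := by
  unfold pt
  rcases Nat.eq_zero_or_pos k with h0 | h0
  · simp [h0, dv]
  rcases eq_or_lt_of_le hk with h | h
  · simp only [dif_neg (by omega : ¬ k = 0), dif_neg (by omega : ¬ k < n), dv]
    have : i.val + 1 ≠ 0 := by omega
    simp [this, h]
  · simp only [dif_neg (by omega : ¬ k = 0), dif_pos h, dv]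
    omega

lemma pt_eq_self {n : ℕ} (hn : 1 ≤ n) (w : SV n) (i : Fin 3) (hl : leg w = some i) :
    pt n i (dv n w) = w := by
  cases w with
  | inl x =>
    by_cases hx : x.val = 0
    · simp [leg, hx] at hl
    · simp only [leg, dif_neg hx, Option.some_inj] at hl
      have hdv : dv n (Sum.inl x) = n := by simp [dv, hx]
      rw [hdv]
      unfold pt
      simp only [dif_neg (by omega : ¬ n = 0), dif_neg (by omega : ¬ n < n)]
      have hiv : i.val = x.val - 1 := by rw [← hl]
      congr 1
      refine Fin.ext ?_
      show i.val + 1 = x.val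
      omega
  | inr p =>
    obtain ⟨i', k⟩ := p
    simp only [leg, Option.some_inj] at hl
    have hdv : dv n (Sum.inr (i', k)) = k.val + 1 := rfl
    rw [hdv]
    have hk := k.isLt
    unfold pt
    simp only [dif_neg (by omega : ¬ k.val + 1 = 0), dif_pos (by omega : k.val + 1 < n)]
    rw [← hl]
    simp

lemma leg_none {n : ℕ} (w : SV n) (h : leg w = none) : w = Sum.inl 0 ∧ dv n w = 0 := by
  cases w with
  | inl x =>
    by_cases hx : x.val = 0
    · exact ⟨by simp [Sum.inl.injEq, Fin.ext_iff, hx], by simp [dv, hx]⟩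
    · simp [leg, hx] at h
  | inr p => simp [leg] at h

lemma dv_bounds {n : ℕ} (hn : 1 ≤ n) (w : SV n) (i : Fin 3) (hl : leg w = some i) :
    1 ≤ dv n w ∧ dv n w ≤ n := by
  cases w with
  | inl x =>
    by_cases hx : x.val = 0
    · simp [leg, hx] at hl
    · simp [dv, hx]; omega
  | inr p => have := p.2.isLt; simp [dv]; omega

lemma head_eq {n : ℕ} (i : Fin 3) (k : Fin n) :
    sHead (fun j : Fin 3 => j.succ) n (i, k) = pt n i (k.val + 1) := by
  have hk := k.isLt
  unfold sHead pt
  by_cases h : k.val = n - 1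
  · simp only [dif_pos h, dif_neg (by omega : ¬ k.val + 1 = 0),
      dif_neg (by omega : ¬ k.val + 1 < n)]
    congr 1
  · simp only [dif_neg h, dif_neg (by omega : ¬ k.val + 1 = 0),
      dif_pos (by omega : k.val + 1 < n)]
    simp

lemma tail_eq {n : ℕ} (i : Fin 3) (k : Fin n) :
    sTail (fun _ : Fin 3 => (0 : Fin 4)) n (i, k) = pt n i k.val := by
  have hk := k.isLt
  unfold sTail pt
  by_cases h : k.val = 0
  · simp only [dif_pos h]
  · simp only [dif_neg h, dif_pos (by omega : k.val < n)]


noncomputable def Gm (n : ℕ) : Matrix (SV n) (SV n) ℝ :=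
  Matrix.of fun x w => if leg x = leg w then ((min (dv n x) (dv n w) : ℕ) : ℝ) else 0

lemma Gm_symm (n : ℕ) : (Gm n)ᵀ = Gm n := by
  ext x w
  simp only [Gm, Matrix.transpose_apply, Matrix.of_apply]
  rcases eq_or_ne (leg x) (leg (n := n) w) with h | h
  · simp [h, Nat.min_comm]
  · simp [h, Ne.symm h]

lemma Gm_pt {n : ℕ} (i : Fin 3) {k : ℕ} (hk : k ≤ n) (w : SV n) :
    Gm n (pt n i k) w = if leg w = some i then ((min k (dv n w) : ℕ) : ℝ) else 0 := by
  rcases Nat.eq_zero_or_pos k with h0 | h0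
  · subst h0
    have hpt : pt n i 0 = Sum.inl 0 := by unfold pt; simp
    rw [hpt]
    simp only [Gm, Matrix.of_apply]
    have hleg : leg (Sum.inl 0 : SV n) = none := by simp [leg]
    rw [hleg]
    rcases hw : leg w with _ | j
    · have := (leg_none w hw).2
      simp [this, dv, show dv n (Sum.inl 0 : SV n) = 0 from by simp [dv]]
    · simp
  · simp only [Gm, Matrix.of_apply, leg_pt i h0 hk, dv_pt i hk]
    rcases eq_or_ne (leg w) (some i) with h | h
    · simp [h]
    · rw [if_neg h, if_neg (fun hh => h hh.symm)]

/-- the incidence matrix of the subdivided star -/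
noncomputable def Bm (n : ℕ) : Matrix (SV n) (Fin 3 × Fin n) ℝ :=
  inc (sHead (fun j : Fin 3 => j.succ) n) (sTail (fun _ : Fin 3 => (0 : Fin 4)) n)

lemma BtG {n : ℕ} (p : Fin 3 × Fin n) (w : SV n) :
    ((Bm n)ᵀ * Gm n) p w
      = if leg w = some p.1 ∧ p.2.val < dv n w then 1 else 0 := by
  obtain ⟨i, k⟩ := p
  have hk := k.isLt
  have hsum : ((Bm n)ᵀ * Gm n) (i, k) w
      = Gm n (pt n i (k.val + 1)) w - Gm n (pt n i k.val) w := by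
    simp only [Matrix.mul_apply, Matrix.transpose_apply, Bm, inc, Matrix.of_apply]
    rw [← head_eq, ← tail_eq]
    simp only [sub_mul, Finset.sum_sub_distrib, ite_mul, one_mul, zero_mul]
    rw [Finset.sum_ite_eq' Finset.univ, Finset.sum_ite_eq' Finset.univ]
    simp
  rw [hsum, Gm_pt i (by omega) w, Gm_pt i (by omega) w]
  by_cases h : leg w = some i
  · rw [if_pos h, if_pos h]
    by_cases hlt : k.val < dv n w
    · rw [if_pos ⟨h, hlt⟩, min_eq_left (by omega), min_eq_left (by omega)]
      push_cast; ring
    · rw [if_neg (fun hc => hlt hc.2), min_eq_right (by omega), min_eq_right (by omega)]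
      ring
  · rw [if_neg h, if_neg h, if_neg (fun hc => h hc.1)]
    ring

lemma LG (n : ℕ) (hn : 1 ≤ n) :
    Bm n * (Bm n)ᵀ * Gm n
      = 1 - Matrix.of (fun u _ : SV n => if u = Sum.inl 0 then (1 : ℝ) else 0) := by
  have hpt0 : ∀ i : Fin 3, pt n i 0 = (Sum.inl 0 : SV n) := fun i => by unfold pt; simp
  rw [Matrix.mul_assoc]
  ext u w
  rw [Matrix.mul_apply]
  simp only [BtG]
  rcases hw : leg w with _ | i₀
  · obtain ⟨hw0, hdv0⟩ := leg_none w hw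
    subst hw0
    rw [Finset.sum_eq_zero (fun p _ => by simp)]
    simp [Matrix.one_apply]
  · set a := dv n w with ha
    obtain ⟨ha1, han⟩ := dv_bounds hn w i₀ hw
    have hstep : ∀ p : Fin 3 × Fin n,
        (Bm n u p * if some i₀ = some p.1 ∧ p.2.val < a then (1:ℝ) else 0)
          = if p.1 = i₀ ∧ p.2.val < a then
              ((if u = pt n i₀ (p.2.val + 1) then (1:ℝ) else 0)
                - (if u = pt n i₀ p.2.val then (1:ℝ) else 0)) else 0 := by
      intro p
      obtain ⟨i, k⟩ := p
      rcases eq_or_ne i i₀ with hi | hi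
      · subst hi
        by_cases hlt : k.val < a
        · rw [if_pos ⟨rfl, hlt⟩, if_pos ⟨rfl, hlt⟩, mul_one]
          simp [Bm, inc, head_eq, tail_eq]
        · rw [if_neg (fun hc => hlt hc.2), if_neg (fun hc => hlt hc.2), mul_zero]
      · rw [if_neg (fun hc => hi (Option.some_inj.mp hc.1).symm),
            if_neg (fun hc => hi hc.1), mul_zero]
    rw [Finset.sum_congr rfl (fun p _ => hstep p), Fintype.sum_prod_type]
    have hrow : ∀ i : Fin 3, (∑ k : Fin n, if i = i₀ ∧ k.val < a then
        ((if u = pt n i₀ (k.val + 1) then (1:ℝ) else 0)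
          - (if u = pt n i₀ k.val then (1:ℝ) else 0)) else 0)
        = if i = i₀ then ((if u = w then (1:ℝ) else 0)
            - (if u = Sum.inl 0 then (1:ℝ) else 0)) else 0 := by
      intro i
      rcases eq_or_ne i i₀ with hi | hi
      · subst hi
        simp only [true_and, if_pos rfl]
        have hfin : (∑ k : Fin n, if k.val < a then
            ((if u = pt n i (k.val + 1) then (1:ℝ) else 0)
              - (if u = pt n i k.val then (1:ℝ) else 0)) else 0)
            = ∑ m ∈ Finset.range n, (if m < a then
            ((if u = pt n i (m + 1) then (1:ℝ) else 0)
              - (if u = pt n i m then (1:ℝ) else 0)) else 0) :=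
          Fin.sum_univ_eq_sum_range (fun m => if m < a then
            ((if u = pt n i (m + 1) then (1:ℝ) else 0)
              - (if u = pt n i m then (1:ℝ) else 0)) else 0) n
        rw [hfin]
        have h2 : (∑ m ∈ Finset.range n, (if m < a then
            ((if u = pt n i (m + 1) then (1:ℝ) else 0)
              - (if u = pt n i m then (1:ℝ) else 0)) else 0))
            = ∑ m ∈ Finset.range a, ((if u = pt n i (m + 1) then (1:ℝ) else 0)
              - (if u = pt n i m then (1:ℝ) else 0)) := by
          rw [← Finset.sum_subset (Finset.range_subset_range.mpr han)
              (fun m _ hm => if_neg (fun hc => hm (Finset.mem_range.mpr hc)))]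
          exact Finset.sum_congr rfl (fun m hm => if_pos (Finset.mem_range.mp hm))
        rw [h2, Finset.sum_range_sub (fun m => if u = pt n i m then (1:ℝ) else 0) a,
          pt_eq_self hn w i hw, hpt0 i]
        simp
      · simp [hi]
    rw [Finset.sum_congr rfl (fun i _ => hrow i),
      Finset.sum_ite_eq' Finset.univ i₀
        (fun _ => ((if u = w then (1:ℝ) else 0) - (if u = Sum.inl 0 then (1:ℝ) else 0)))]
    simp [Matrix.one_apply]


noncomputable def Jm (n : ℕ) : Matrix (SV n) (SV n) ℝ := Matrix.of fun _ _ => 1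
noncomputable def Ec (n : ℕ) : Matrix (SV n) (SV n) ℝ :=
  Matrix.of fun u _ => if u = Sum.inl 0 then (1 : ℝ) else 0
noncomputable def Pm (n : ℕ) : Matrix (SV n) (SV n) ℝ := 1 - (3 * (n:ℝ) + 1)⁻¹ • Jm n

lemma card_SV (n : ℕ) (hn : 1 ≤ n) : Fintype.card (SV n) = 3 * n + 1 := by
  simp [SV, Fintype.card_sum, Fintype.card_prod]
  omega

lemma hv_ne (n : ℕ) : (3 * (n:ℝ) + 1) ≠ 0 := by positivity

lemma colsum (n : ℕ) (e : Fin 3 × Fin n) : (∑ x : SV n, Bm n x e) = 0 := by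
  simp only [Bm, inc, Matrix.of_apply, Finset.sum_sub_distrib]
  rw [Finset.sum_ite_eq' Finset.univ, Finset.sum_ite_eq' Finset.univ]
  simp

lemma BtJ (n : ℕ) : (Bm n)ᵀ * Jm n = 0 := by
  ext e w
  simp only [Matrix.mul_apply, Matrix.transpose_apply, Jm, Matrix.of_apply, mul_one,
    Matrix.zero_apply]
  exact colsum n e

lemma JB (n : ℕ) : Jm n * Bm n = 0 := by
  ext w e
  simp only [Matrix.mul_apply, Jm, Matrix.of_apply, one_mul, Matrix.zero_apply]
  exact colsum n e

lemma LJ (n : ℕ) : Bm n * (Bm n)ᵀ * Jm n = 0 := by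
  rw [Matrix.mul_assoc, BtJ, Matrix.mul_zero]

lemma JL (n : ℕ) : Jm n * (Bm n * (Bm n)ᵀ) = 0 := by
  rw [← Matrix.mul_assoc, JB, Matrix.zero_mul]

lemma JJ (n : ℕ) (hn : 1 ≤ n) : Jm n * Jm n = (3 * (n:ℝ) + 1) • Jm n := by
  ext u w
  simp only [Matrix.mul_apply, Jm, Matrix.of_apply, mul_one, Matrix.smul_apply,
    smul_eq_mul]
  rw [Finset.sum_const, Finset.card_univ, card_SV n hn]
  push_cast; ring

lemma EcJ (n : ℕ) (hn : 1 ≤ n) : Ec n * Jm n = (3 * (n:ℝ) + 1) • Ec n := by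
  ext u w
  simp only [Matrix.mul_apply, Ec, Jm, Matrix.of_apply, mul_one, Matrix.smul_apply,
    smul_eq_mul]
  rw [Finset.sum_const, Finset.card_univ, card_SV n hn]
  rcases eq_or_ne u (Sum.inl 0 : SV n) with h | h
  · simp only [h, if_pos rfl, smul_eq_mul, mul_one, nsmul_eq_mul]
    push_cast; ring
  · simp [h]

lemma EcP (n : ℕ) (hn : 1 ≤ n) : Ec n * Pm n = 0 := by
  rw [Pm, Matrix.mul_sub, Matrix.mul_one, Matrix.mul_smul, EcJ n hn,
    smul_smul, inv_mul_cancel₀ (hv_ne n), one_smul, sub_self]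

lemma LP (n : ℕ) : Bm n * (Bm n)ᵀ * Pm n = Bm n * (Bm n)ᵀ := by
  rw [Pm, Matrix.mul_sub, Matrix.mul_one, Matrix.mul_smul, LJ, smul_zero, sub_zero]

lemma PL (n : ℕ) : Pm n * (Bm n * (Bm n)ᵀ) = Bm n * (Bm n)ᵀ := by
  rw [Pm, Matrix.sub_mul, Matrix.one_mul, Matrix.smul_mul, JL, smul_zero, sub_zero]

lemma PP (n : ℕ) (hn : 1 ≤ n) : Pm n * Pm n = Pm n := by
  simp only [Pm, Matrix.mul_sub, Matrix.sub_mul, Matrix.mul_one, Matrix.one_mul,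
    Matrix.mul_smul, Matrix.smul_mul, JJ n hn, smul_smul,
    inv_mul_cancel₀ (hv_ne n), mul_one, one_smul, smul_zero, sub_zero]
  abel_nf
  simp

lemma Jm_symm (n : ℕ) : (Jm n)ᵀ = Jm n := by
  ext u w; simp [Jm]

lemma Pm_symm (n : ℕ) : (Pm n)ᵀ = Pm n := by
  rw [Pm, Matrix.transpose_sub, Matrix.transpose_one, Matrix.transpose_smul, Jm_symm]

lemma L_symm (n : ℕ) : (Bm n * (Bm n)ᵀ)ᵀ = Bm n * (Bm n)ᵀ := by
  rw [Matrix.transpose_mul, Matrix.transpose_transpose]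

lemma LBfull (n : ℕ) (hn : 1 ≤ n) :
    Bm n * (Bm n)ᵀ * (Pm n * Gm n * Pm n) = Pm n := by
  have h1 : Bm n * (Bm n)ᵀ * (Pm n * Gm n * Pm n)
      = (Bm n * (Bm n)ᵀ * Pm n) * Gm n * Pm n := by
    simp only [Matrix.mul_assoc]
  rw [h1, LP, LG n hn, Matrix.sub_mul, Matrix.one_mul]
  rw [show Matrix.of (fun u _ : SV n => if u = Sum.inl 0 then (1:ℝ) else 0) = Ec n from rfl,
    EcP n hn, sub_zero]

lemma Bfull_symm (n : ℕ) : (Pm n * Gm n * Pm n)ᵀ = Pm n * Gm n * Pm n := by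
  rw [Matrix.transpose_mul, Matrix.transpose_mul, Pm_symm, Gm_symm, Matrix.mul_assoc]

lemma BfullL (n : ℕ) (hn : 1 ≤ n) :
    (Pm n * Gm n * Pm n) * (Bm n * (Bm n)ᵀ) = Pm n := by
  have h := congrArg Matrix.transpose (LBfull n hn)
  rwa [Matrix.transpose_mul, Bfull_symm, L_symm, Pm_symm] at h

theorem isMP_main (n : ℕ) (hn : 1 ≤ n) :
    IsMP (Bm n * (Bm n)ᵀ) (Pm n * Gm n * Pm n) := by
  refine ⟨?_, ?_, ?_, ?_⟩
  · have h1 : Bm n * (Bm n)ᵀ * (Pm n * Gm n * Pm n) * (Bm n * (Bm n)ᵀ)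
        = Bm n * (Bm n)ᵀ * (Pm n * Gm n * Pm n * (Bm n * (Bm n)ᵀ)) :=
      Matrix.mul_assoc _ _ _
    rw [h1, BfullL n hn, LP]
  · have h1 : Pm n * Gm n * Pm n * (Bm n * (Bm n)ᵀ) * (Pm n * Gm n * Pm n)
        = Pm n * Gm n * Pm n * (Bm n * (Bm n)ᵀ * (Pm n * Gm n * Pm n)) :=
      Matrix.mul_assoc _ _ _
    rw [h1, LBfull n hn]
    have h2 : Pm n * Gm n * Pm n * Pm n = Pm n * Gm n * (Pm n * Pm n) :=
      Matrix.mul_assoc _ _ _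
    rw [h2, PP n hn]
  · rw [LBfull n hn, Pm_symm]
  · rw [BfullL n hn, Pm_symm]


lemma gauss (m : ℕ) : 2 * (∑ k ∈ Finset.range m, (k + 1)) = m * (m + 1) := by
  induction m with
  | zero => simp
  | succ m ih =>
    rw [Finset.sum_range_succ, Nat.mul_add]
    rw [ih]; ring

lemma sixmin (m : ℕ) :
    6 * (∑ a ∈ Finset.range m, ∑ b ∈ Finset.range m, (min a b + 1))
      = m * (m + 1) * (2 * m + 1) := by
  induction m with
  | zero => simp
  | succ m ih =>
    have h1 : ∀ a ∈ Finset.range m, (∑ b ∈ Finset.range (m + 1), (min a b + 1))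
        = (∑ b ∈ Finset.range m, (min a b + 1)) + (a + 1) := by
      intro a ha
      rw [Finset.sum_range_succ, min_eq_left (le_of_lt (Finset.mem_range.mp ha))]
    have h2 : (∑ b ∈ Finset.range (m + 1), (min m b + 1))
        = (∑ b ∈ Finset.range m, (b + 1)) + (m + 1) := by
      rw [Finset.sum_range_succ, min_self]
      congr 1
      exact Finset.sum_congr rfl (fun b hb => by
        rw [min_eq_right (le_of_lt (Finset.mem_range.mp hb))])
    rw [Finset.sum_range_succ, Finset.sum_congr rfl h1, h2, Finset.sum_add_distrib]
    have g := gauss m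
    zify at ih g ⊢
    linear_combination ih + 6 * g

lemma v4_0 : ((0 : Fin 4)).val = 0 := rfl
lemma v4_1 : ((1 : Fin 4)).val = 1 := rfl
lemma v4_2 : ((2 : Fin 4)).val = 2 := rfl
lemma v4_3 : ((3 : Fin 4)).val = 3 := rfl
lemma v3_0 : ((0 : Fin 3)).val = 0 := rfl
lemma v3_1 : ((1 : Fin 3)).val = 1 := rfl
lemma v3_2 : ((2 : Fin 3)).val = 2 := rfl

def gval (n : ℕ) (x w : SV n) : ℕ := if leg x = leg w then min (dv n x) (dv n w) else 0

lemma Gm_cast (n : ℕ) (x w : SV n) : Gm n x w = ((gval n x w : ℕ) : ℝ) := by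
  simp [Gm, gval, apply_ite (Nat.cast : ℕ → ℝ)]

lemma gval_diag (n : ℕ) (x : SV n) : gval n x x = dv n x := by
  simp [gval]

lemma gval_inl_inl (n : ℕ) (a b : Fin 4) :
    gval n (Sum.inl a) (Sum.inl b)
      = if a = b then (if a.val = 0 then 0 else n) else 0 := by
  fin_cases a <;> fin_cases b <;>
    simp [gval, leg, dv, Fin.ext_iff, v4_0, v4_1, v4_2, v4_3]

lemma gval_inl_inr (n : ℕ) (a : Fin 4) (p : Fin 3 × Fin (n - 1)) :
    gval n (Sum.inl a) (Sum.inr p) = if a = p.1.succ then p.2.val + 1 else 0 := by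
  obtain ⟨i, k⟩ := p
  have hk := k.isLt
  have hm : min n (k.val + 1) = k.val + 1 := by omega
  have hm2 : min (k.val + 1) n = k.val + 1 := by omega
  fin_cases a <;> fin_cases i <;>
    simp [gval, leg, dv, Fin.ext_iff, Fin.val_succ, hm, hm2,
      v4_0, v4_1, v4_2, v4_3, v3_0, v3_1, v3_2]

lemma gval_inr_inl (n : ℕ) (p : Fin 3 × Fin (n - 1)) (a : Fin 4) :
    gval n (Sum.inr p) (Sum.inl a) = if a = p.1.succ then p.2.val + 1 else 0 := by
  obtain ⟨i, k⟩ := p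
  have hk := k.isLt
  have hm : min n (k.val + 1) = k.val + 1 := by omega
  have hm2 : min (k.val + 1) n = k.val + 1 := by omega
  fin_cases a <;> fin_cases i <;>
    simp [gval, leg, dv, Fin.ext_iff, Fin.val_succ, hm, hm2,
      v4_0, v4_1, v4_2, v4_3, v3_0, v3_1, v3_2]

lemma gval_inr_inr (n : ℕ) (p q : Fin 3 × Fin (n - 1)) :
    gval n (Sum.inr p) (Sum.inr q)
      = if p.1 = q.1 then min p.2.val q.2.val + 1 else 0 := by
  obtain ⟨i, k⟩ := p; obtain ⟨j, l⟩ := q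
  simp only [gval, leg, dv, Option.some.injEq]
  rcases eq_or_ne i j with h | h
  · simp [h, Nat.succ_min_succ]
  · simp [h]

lemma sum_dv (n : ℕ) (hn : 1 ≤ n) :
    2 * (∑ x : SV n, dv n x) = 3 * n * (n + 1) := by
  rw [Fintype.sum_sum_type, Fintype.sum_prod_type]
  have h1 : (∑ a : Fin 4, dv n (Sum.inl a)) = 3 * n := by
    show (∑ a : Fin 4, if a.val = 0 then 0 else n) = 3 * n
    rw [Fin.sum_univ_four]
    simp [v4_0, v4_1, v4_2, v4_3]
    ring
  have h2 : ∀ i : Fin 3, (∑ k : Fin (n-1), dv n (Sum.inr (i, k)))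
      = ∑ k ∈ Finset.range (n-1), (k + 1) :=
    fun i => Fin.sum_univ_eq_sum_range (fun k => k + 1) (n - 1)
  rw [h1, Finset.sum_congr rfl (fun i _ => h2 i), Fin.sum_univ_three]
  have g := gauss (n - 1)
  zify [hn] at g ⊢
  linear_combination 3 * g

lemma Ntot_eq (n : ℕ) (hn : 1 ≤ n) :
    6 * (∑ u : SV n, ∑ x : SV n, gval n x u) = 3 * n * (n + 1) * (2 * n + 1) := by
  rw [Fintype.sum_sum_type]
  have hA : (∑ b : Fin 4, ∑ x : SV n, gval n x (Sum.inl b))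
      = 3 * n + 3 * ∑ k ∈ Finset.range (n-1), (k + 1) := by
    have hone : ∀ b : Fin 4, (∑ x : SV n, gval n x (Sum.inl b))
        = (if b.val = 0 then 0 else n)
          + ∑ p : Fin 3 × Fin (n-1), (if b = p.1.succ then p.2.val + 1 else 0) := by
      intro b
      rw [Fintype.sum_sum_type]
      congr 1
      · simp only [gval_inl_inl]
        rw [Finset.sum_ite_eq' Finset.univ b (fun a => if a.val = 0 then 0 else n)]
        simp
      · exact Finset.sum_congr rfl (fun p _ => gval_inr_inl n p b)
    rw [Finset.sum_congr rfl (fun b _ => hone b), Finset.sum_add_distrib]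
    have hsecond : (∑ b : Fin 4, ∑ p : Fin 3 × Fin (n-1),
        (if b = p.1.succ then p.2.val + 1 else 0))
        = 3 * ∑ k ∈ Finset.range (n-1), (k + 1) := by
      rw [Finset.sum_comm]
      rw [Finset.sum_congr rfl (fun p _ =>
        Finset.sum_ite_eq' Finset.univ p.1.succ (fun _ => p.2.val + 1))]
      simp only [Finset.mem_univ, if_true]
      rw [Fintype.sum_prod_type, Fin.sum_univ_three,
        Fin.sum_univ_eq_sum_range (fun k => k + 1) (n - 1)]
      ring
    rw [hsecond, Fin.sum_univ_four]
    simp [v4_0, v4_1, v4_2, v4_3]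
    ring
  have hC : (∑ q : Fin 3 × Fin (n-1), ∑ x : SV n, gval n x (Sum.inr q))
      = 3 * (∑ k ∈ Finset.range (n-1), (k + 1))
        + 3 * ∑ a ∈ Finset.range (n-1), ∑ b ∈ Finset.range (n-1), (min a b + 1) := by
    have hone : ∀ q : Fin 3 × Fin (n-1), (∑ x : SV n, gval n x (Sum.inr q))
        = (q.2.val + 1) + ∑ k : Fin (n-1), (min k.val q.2.val + 1) := by
      intro q
      rw [Fintype.sum_sum_type]
      congr 1
      · simp only [gval_inl_inr]
        rw [Finset.sum_ite_eq' Finset.univ q.1.succ (fun _ => q.2.val + 1)]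
        simp
      · rw [Fintype.sum_prod_type, Finset.sum_comm]
        simp only [gval_inr_inr]
        rw [Finset.sum_congr rfl (fun k _ =>
          Finset.sum_ite_eq' Finset.univ q.1 (fun _ => min k.val q.2.val + 1))]
        simp
    rw [Finset.sum_congr rfl (fun q _ => hone q), Finset.sum_add_distrib]
    congr 1
    · rw [Fintype.sum_prod_type, Fin.sum_univ_three]
      have := Fin.sum_univ_eq_sum_range (fun k => k + 1) (n - 1)
      rw [this]
      ring
    · rw [Fintype.sum_prod_type, Fin.sum_univ_three]
      have hin : (∑ l : Fin (n-1), ∑ k : Fin (n-1), (min k.val l.val + 1))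
          = ∑ a ∈ Finset.range (n-1), ∑ b ∈ Finset.range (n-1), (min a b + 1) := by
        rw [Finset.sum_congr rfl (fun l (_ : l ∈ Finset.univ) =>
          Fin.sum_univ_eq_sum_range (fun b => min b l.val + 1) (n-1))]
        rw [Fin.sum_univ_eq_sum_range
          (fun a => ∑ b ∈ Finset.range (n-1), (min b a + 1)) (n-1)]
        exact Finset.sum_congr rfl (fun a _ => Finset.sum_congr rfl (fun b _ => by
          rw [Nat.min_comm]))
      rw [hin]
      ring
  have g := gauss (n - 1)
  have s6 := sixmin (n - 1)
  rw [hA, hC]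
  zify [hn] at g s6 ⊢
  linear_combination 18 * g + 3 * s6


noncomputable def Tsum (n : ℕ) : ℝ := ∑ u : SV n, ∑ x : SV n, Gm n x u

lemma traceGm (n : ℕ) (hn : 1 ≤ n) :
    2 * Matrix.trace (Gm n) = 3 * (n:ℝ) * ((n:ℝ) + 1) := by
  have h1 : Matrix.trace (Gm n) = ((∑ x : SV n, dv n x : ℕ) : ℝ) := by
    rw [Matrix.trace, Nat.cast_sum]
    exact Finset.sum_congr rfl (fun x _ => by
      rw [Matrix.diag_apply, Gm_cast, gval_diag])
  have h3 := congrArg (Nat.cast : ℕ → ℝ) (sum_dv n hn)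
  push_cast at h3 h1
  rw [h1]
  linarith

lemma tsumGm (n : ℕ) (hn : 1 ≤ n) :
    2 * Tsum n = (n:ℝ) * ((n:ℝ) + 1) * (2 * (n:ℝ) + 1) := by
  have h1 : Tsum n = ((∑ u : SV n, ∑ x : SV n, gval n x u : ℕ) : ℝ) := by
    rw [Tsum, Nat.cast_sum]
    refine Finset.sum_congr rfl (fun u _ => ?_)
    rw [Nat.cast_sum]
    exact Finset.sum_congr rfl (fun x _ => Gm_cast n x u)
  have h3 := congrArg (Nat.cast : ℕ → ℝ) (Ntot_eq n hn)
  push_cast at h3 h1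
  rw [h1]
  linarith

lemma trace_JmGm (n : ℕ) : Matrix.trace (Jm n * Gm n) = Tsum n := by
  rw [Matrix.trace, Tsum]
  refine Finset.sum_congr rfl (fun u _ => ?_)
  rw [Matrix.diag_apply, Matrix.mul_apply]
  exact Finset.sum_congr rfl (fun x _ => by simp [Jm])

lemma trace_Bfull (n : ℕ) (hn : 1 ≤ n) :
    Matrix.trace (Pm n * Gm n * Pm n)
      = Matrix.trace (Gm n) - (3 * (n:ℝ) + 1)⁻¹ * Tsum n := by
  rw [Matrix.trace_mul_comm (Pm n * Gm n) (Pm n), ← Matrix.mul_assoc, PP n hn]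
  rw [Pm, Matrix.sub_mul, Matrix.one_mul, Matrix.smul_mul, Matrix.trace_sub,
    Matrix.trace_smul, trace_JmGm]
  simp [smul_eq_mul]

end StarAux

/-- Exact contraction factor of the `n`-part subdivided 3-star (Y) polymer. -/
theorem contraction_factor_subdivided_three_star
    (n : ℕ) (hn : 2 ≤ n)
    (M : Matrix ((Fin 4) ⊕ (Fin 3 × Fin (n - 1))) ((Fin 4) ⊕ (Fin 3 × Fin (n - 1))) ℝ)
    (hM : IsMP (inc (sHead (fun j : Fin 3 => j.succ) n) (sTail (fun _ : Fin 3 => (0 : Fin 4)) n) *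
      (inc (sHead (fun j : Fin 3 => j.succ) n) (sTail (fun _ : Fin 3 => (0 : Fin 4)) n))ᵀ) M) :
    6 * M.trace / ((3 * (n : ℝ) + 1) ^ 2 - 1)
        = (7 * (n : ℝ) ^ 2 + 9 * (n : ℝ) + 2) / (9 * (n : ℝ) ^ 2 + 9 * (n : ℝ) + 2) ∧
      M.trace = (n : ℝ) * ((n : ℝ) + 1) * (7 * (n : ℝ) + 2) / (2 * (3 * (n : ℝ) + 1)) := by
  have hn1 : 1 ≤ n := by omega
  have hM2 : IsMP (StarAux.Bm n * (StarAux.Bm n)ᵀ) M := hM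
  have hMeq : M = StarAux.Pm n * StarAux.Gm n * StarAux.Pm n :=
    StarAux.mp_unique _ M _ hM2 (StarAux.isMP_main n hn1)
  have tA := StarAux.traceGm n hn1
  have tB := StarAux.tsumGm n hn1
  have hv : (3 * (n:ℝ) + 1) ≠ 0 := StarAux.hv_ne n
  have hT : M.trace = (n : ℝ) * ((n : ℝ) + 1) * (7 * (n : ℝ) + 2) / (2 * (3 * (n : ℝ) + 1)) := by
    rw [hMeq, StarAux.trace_Bfull n hn1]
    field_simp
    ring_nf
    ring_nf at tA tB
    nlinarith [tA, tB]
  refine ⟨?_, hT⟩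
  rw [hT]
  have hnR : (2:ℝ) ≤ (n:ℝ) := by exact_mod_cast hn
  have hd1 : ((3 * (n : ℝ) + 1) ^ 2 - 1) ≠ 0 := by nlinarith
  have hd2 : (9 * (n : ℝ) ^ 2 + 9 * (n : ℝ) + 2) ≠ 0 := by positivity
  rw [div_eq_div_iff hd1 hd2]
  field_simp
  ring
end

section
/- Let m ≥ 1 and n ≥ 2, and let Θ be the m-multitheta structure graph: the directed multigraph with 2 vertices and m parallel edges, each with tail 0 and head 1 (so both vertices have degree m). Put the weight ω(i) = m + 2/(n-1) on each of the two vertices, let D = diagonal ω, let 𝓛 = D^(-1/2) * L(Θ) * D^(-1/2) be the weighted graph Laplacian, and let M be its Moore–Penrose pseudoinverse. Then trace(M) = 1/(m·(n-1)) + 1/2. -/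
open Matrix

lemma isMP_unique {l m : Type*} [Fintype l] [Fintype m] (A : Matrix l m ℝ)
    (B C : Matrix m l ℝ) (hB : IsMP A B) (hC : IsMP A C) : B = C := by
  obtain ⟨b1, b2, b3, b4⟩ := hB
  obtain ⟨c1, c2, c3, c4⟩ := hC
  have hAB : A * B = A * C := by
    calc A * B = (A * C * A) * B := by rw [c1]
    _ = (A * C) * (A * B) := by rw [Matrix.mul_assoc]
    _ = (A * C)ᵀ * (A * B)ᵀ := by rw [c3, b3]
    _ = Cᵀ * (A * B * A)ᵀ := by simp [Matrix.transpose_mul, Matrix.mul_assoc]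
    _ = Cᵀ * Aᵀ := by rw [b1]
    _ = (A * C)ᵀ := by rw [Matrix.transpose_mul]
    _ = A * C := c3
  have hBA : B * A = C * A := by
    calc B * A = B * (A * C * A) := by rw [c1]
    _ = (B * A) * (C * A) := by simp [Matrix.mul_assoc]
    _ = (B * A)ᵀ * (C * A)ᵀ := by rw [b4, c4]
    _ = (A * (B * A))ᵀ * Cᵀ := by simp [Matrix.transpose_mul, Matrix.mul_assoc]
    _ = Aᵀ * Cᵀ := by rw [← Matrix.mul_assoc, b1]
    _ = (C * A)ᵀ := by rw [Matrix.transpose_mul]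
    _ = C * A := c4
  calc B = B * A * B := b2.symm
  _ = B * (A * C) := by rw [Matrix.mul_assoc, hAB]
  _ = (C * A) * C := by rw [← Matrix.mul_assoc, hBA]
  _ = C := c2

lemma wLap_multitheta (m : ℕ) (ω : ℝ) (hω : 0 < ω) :
    wLap (fun _ : Fin m => (1 : Fin 2)) (fun _ : Fin m => (0 : Fin 2)) (fun _ => ω)
      = ((m : ℝ)/ω) • !![1,-1;-1,1] := by
  have hs : (Real.sqrt ω)⁻¹ * (Real.sqrt ω)⁻¹ = ω⁻¹ := by
    rw [← mul_inv, Real.mul_self_sqrt hω.le]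
  ext i k
  fin_cases i <;> fin_cases k <;>
    simp [wLap, inc, Matrix.mul_apply, Matrix.diagonal, Finset.mul_sum, hs] <;> ring_nf <;>
    rw [sq, hs] <;> ring

/-- Trace of the pseudoinverse of the weighted Laplacian of the `m`-multitheta
structure graph with weights `m + 2/(n-1)`. -/
theorem multitheta_weighted_laplacian_trace
    (m n : ℕ) (hm : 1 ≤ m) (hn : 2 ≤ n)
    (M : Matrix (Fin 2) (Fin 2) ℝ)
    (hM : IsMP (wLap (fun _ : Fin m => (1 : Fin 2)) (fun _ : Fin m => (0 : Fin 2))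
      (fun _ => (m : ℝ) + 2 / ((n : ℝ) - 1))) M) :
    M.trace = 1 / ((m : ℝ) * ((n : ℝ) - 1)) + 1 / 2 := by
  have hm' : (1 : ℝ) ≤ (m : ℝ) := by exact_mod_cast hm
  have hn' : (1 : ℝ) ≤ (n : ℝ) - 1 := by
    have : (2 : ℝ) ≤ (n : ℝ) := by exact_mod_cast hn
    linarith
  set ω : ℝ := (m : ℝ) + 2 / ((n : ℝ) - 1) with hωdef
  have hω : 0 < ω := by
    have : 0 < 2 / ((n : ℝ) - 1) := by positivity
    simp only [hωdef]; linarith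
  have hA := wLap_multitheta m ω hω
  set A := wLap (fun _ : Fin m => (1 : Fin 2)) (fun _ : Fin m => (0 : Fin 2)) (fun _ => ω)
  set B : Matrix (Fin 2) (Fin 2) ℝ := (ω / (4 * m)) • !![1,-1;-1,1] with hBdef
  have hmne : (m : ℝ) ≠ 0 := by linarith
  have hωne : ω ≠ 0 := hω.ne'
  set K : Matrix (Fin 2) (Fin 2) ℝ := !![1,-1;-1,1] with hKdef
  have hK : K * K = (2 : ℝ) • K := by
    ext i k
    fin_cases i <;> fin_cases k <;>
      simp [hKdef, Matrix.mul_apply, Fin.sum_univ_two] <;> norm_num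
  have hKT : Kᵀ = K := by
    ext i k
    fin_cases i <;> fin_cases k <;> simp [hKdef]
  have hAB : A * B = (1/2 : ℝ) • K := by
    rw [hA, hBdef, Matrix.smul_mul, Matrix.mul_smul, hK, smul_smul, smul_smul]
    congr 1
    field_simp
    ring
  have hBA : B * A = (1/2 : ℝ) • K := by
    rw [hA, hBdef, Matrix.smul_mul, Matrix.mul_smul, hK, smul_smul, smul_smul]
    congr 1
    field_simp
    ring
  have hMPB : IsMP A B := by
    refine ⟨?_, ?_, ?_, ?_⟩
    · rw [hAB, hA, Matrix.smul_mul, Matrix.mul_smul, hK, smul_smul, smul_smul]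
      congr 1
      ring
    · rw [hBA, hBdef, Matrix.smul_mul, Matrix.mul_smul, hK, smul_smul, smul_smul]
      congr 1
      ring
    · rw [hAB, Matrix.transpose_smul, hKT]
    · rw [hBA, Matrix.transpose_smul, hKT]
  have hMB : M = B := isMP_unique A M B hM hMPB
  have hnne : (n : ℝ) - 1 ≠ 0 := by linarith
  rw [hMB, hBdef, hKdef]
  simp only [Matrix.trace, Matrix.diag, Matrix.smul_apply, Fin.sum_univ_two]
  norm_num [hωdef]
  field_simp
  ring
end
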